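/- arXiv:1907.10842 — 5 statements merged into one kernel-verified Lean document; each statement's English description precedes it below -/
import Mathlib

section
/- Let π ∈ NC(n) and let 𝔐 be a set of blocks of π containing all the outer blocks of π. Then there exists a unique block-projection Φ : π → π with Ran(Φ) = 𝔐. -/
open Finset

/-- Partitions of `{1,...,n}`, modelled as finpartitions of `Fin n`. -/
abbrev NCPart (n : ℕ) := Finpartition (Finset.univ : Finset (Fin n))

/-- `i` and `j` lie in the same block of `π`. -/
def SameBlock {n : ℕ} (π : NCPart n) (i j : Fin n) : Prop :=
  ∃ B ∈ π.parts, i ∈ B ∧ j ∈ B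

/-- `π` is a non-crossing partition. -/
def IsNoncrossing {n : ℕ} (π : NCPart n) : Prop :=
  ∀ i1 i2 i3 i4 : Fin n, i1 < i2 → i2 < i3 → i3 < i4 →
    SameBlock π i1 i3 → SameBlock π i2 i4 → SameBlock π i1 i2

/-- `π` is an interval partition: every block is an integer interval. -/
def IsIntervalPart {n : ℕ} (π : NCPart n) : Prop :=
  ∀ B ∈ π.parts, ∃ i j : Fin n, i ≤ j ∧ B = Finset.Icc i j

/-- The nesting order: `V ⊑ W` iff `min W ≤ min V` and `max V ≤ max W`. -/
def Nested {n : ℕ} (V W : Finset (Fin n)) : Prop :=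
  W.min ≤ V.min ∧ V.max ≤ W.max

def StrictNested {n : ℕ} (V W : Finset (Fin n)) : Prop :=
  Nested V W ∧ V ≠ W

/-- An outer block: a block maximal with respect to the nesting order. -/
def IsOuter {n : ℕ} (π : NCPart n) (W : Finset (Fin n)) : Prop :=
  W ∈ π.parts ∧ ∀ V ∈ π.parts, Nested W V → V = W

/-- `P` is the parent block of `V` in `π`. -/
def IsParent {n : ℕ} (π : NCPart n) (V P : Finset (Fin n)) : Prop :=
  P ∈ π.parts ∧ StrictNested V P ∧
    ¬ ∃ V' ∈ π.parts, StrictNested V V' ∧ StrictNested V' P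

/-- `π` refines `ρ`: every block of `ρ` is a union of blocks of `π`. -/
def Refines {n : ℕ} (π ρ : NCPart n) : Prop :=
  ∀ B ∈ π.parts, ∃ C ∈ ρ.parts, B ⊆ C

/-- The partial order `π ≪ ρ`. -/
def LL {n : ℕ} (π ρ : NCPart n) : Prop :=
  Refines π ρ ∧ ∀ W ∈ ρ.parts, ∃ V ∈ π.parts, V ⊆ W ∧ V.min = W.min ∧ V.max = W.max

/-- The colouring `c` is constant on every block of `π`. -/
def MonoChrome {n s : ℕ} (c : Fin n → Fin s) (π : NCPart n) : Prop :=
  ∀ B ∈ π.parts, ∀ i ∈ B, ∀ j ∈ B, c i = c j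

/-- Vertical no-repeat property: every inner block has colour different from its parent. -/
def VNRP {n s : ℕ} (c : Fin n → Fin s) (π : NCPart n) : Prop :=
  ∀ V P : Finset (Fin n), V ∈ π.parts → IsParent π V P →
    ∀ i ∈ V, ∀ j ∈ P, c i ≠ c j

/-- The depth of (the block of) `j` in `π`: the number of blocks strictly nesting it. -/
noncomputable def blockDepth {n : ℕ} (π : NCPart n) (j : Fin n) : ℕ :=
  Set.ncard {W : Finset (Fin n) | W ∈ π.parts ∧ ∃ B ∈ π.parts, j ∈ B ∧ StrictNested B W}

/-- `j` is the maximum of an outer block of `π`. -/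
def IsOuterMax {n : ℕ} (π : NCPart n) (j : Fin n) : Prop :=
  ∃ B, IsOuter π B ∧ j ∈ B ∧ ∀ i ∈ B, i ≤ j

/-- `j` is the minimum of an outer block of `π`. -/
def IsOuterMin {n : ℕ} (π : NCPart n) (j : Fin n) : Prop :=
  ∃ B, IsOuter π B ∧ j ∈ B ∧ ∀ i ∈ B, j ≤ i

/-- Anticommutator-friendly partitions of `{1,...,2n}` (0-indexed: odd numbers
`1,3,...,2n-1` correspond to even indices, and `2n` to index `2n-1`). -/
def ACFriendly (n : ℕ) (π : NCPart (2*n)) : Prop :=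
  (∀ j : Fin (2*n), IsOuterMax π j → Even (j : ℕ) ∨ (j : ℕ) = 2*n - 1) ∧
  (∀ j j' : Fin (2*n), Even (j : ℕ) → (j' : ℕ) = (j : ℕ) + 1 → ¬ IsOuterMax π j →
    blockDepth π j ≠ blockDepth π j')

/-- A pairing: every block has exactly two elements. -/
def IsPairing {n : ℕ} (π : NCPart n) : Prop :=
  ∀ B ∈ π.parts, B.card = 2

/-- A block-projection for `π`. -/
structure BlockProjection {n : ℕ} (π : NCPart n) where
  toFun : {B : Finset (Fin n) // B ∈ π.parts} → {B : Finset (Fin n) // B ∈ π.parts}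
  idem : ∀ A, toFun (toFun A) = toFun A
  mono : ∀ A B, Nested A.val B.val → Nested (toFun A).val (toFun B).val
  le_apply : ∀ A, Nested A.val (toFun A).val


/-!
Blocks of a noncrossing partition are ordered by nesting, and the blocks nesting a given
block `A` form a chain: two blocks whose spans overlap are nested, by noncrossingness. Since `𝔐`
contains an outer block above `A`, there is a least block of `𝔐` above `A`, and this is the
projection. Conversely, every block-projection `Φ` sends `A` to the least block of `Ran(Φ)`
above `A`, so `Φ` is determined by its range.
-/

namespace NCPart

variable {n : ℕ} {π : NCPart n}

abbrev Block (π : NCPart n) := {B : Finset (Fin n) // B ∈ π.parts}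

namespace Block

noncomputable def min (A : Block π) : Fin n := A.val.min' (π.nonempty_of_mem_parts A.2)

noncomputable def max (A : Block π) : Fin n := A.val.max' (π.nonempty_of_mem_parts A.2)

noncomputable def width (A : Block π) : ℕ := A.max - A.min

lemma min_mem (A : Block π) : A.min ∈ A.val := min'_mem _ _

lemma max_mem (A : Block π) : A.max ∈ A.val := max'_mem _ _

lemma min_le_max (A : Block π) : A.min ≤ A.max := min'_le _ _ A.max_mem

lemma eq_of_mem_of_mem {A B : Block π} {a : Fin n} (hA : a ∈ A.val) (hB : a ∈ B.val) :
    A = B :=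
  Subtype.ext (π.eq_of_mem_parts A.2 B.2 hA hB)

lemma eq_of_min_eq {A B : Block π} (h : A.min = B.min) : A = B :=
  eq_of_mem_of_mem A.min_mem (h ▸ B.min_mem)

end Block

lemma nested_iff (A B : Block π) : Nested A.val B.val ↔ B.min ≤ A.min ∧ A.max ≤ B.max := by
  rw [Nested, ← coe_min' (π.nonempty_of_mem_parts A.2), ← coe_min' (π.nonempty_of_mem_parts B.2),
    ← coe_max' (π.nonempty_of_mem_parts A.2), ← coe_max' (π.nonempty_of_mem_parts B.2),
    WithTop.coe_le_coe, WithBot.coe_le_coe]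
  rfl

lemma nested_refl (A : Finset (Fin n)) : Nested A A := ⟨le_rfl, le_rfl⟩

lemma nested_trans {A B C : Finset (Fin n)} (hAB : Nested A B) (hBC : Nested B C) :
    Nested A C :=
  ⟨hBC.1.trans hAB.1, hAB.2.trans hBC.2⟩

lemma nested_antisymm {A B : Block π} (hAB : Nested A.val B.val) (hBA : Nested B.val A.val) :
    A = B :=
  Block.eq_of_min_eq (le_antisymm ((nested_iff B A).1 hBA).1 ((nested_iff A B).1 hAB).1)

lemma eq_of_nested_of_width_le {A B : Block π} (hAB : Nested A.val B.val)
    (hw : B.width ≤ A.width) : A = B := by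
  obtain ⟨hmin, hmax⟩ := (nested_iff A B).1 hAB
  have hA := A.min_le_max
  have hB := B.min_le_max
  unfold Block.width at hw
  exact Block.eq_of_min_eq (Fin.ext (by omega))

lemma exists_isOuter_nested (A : Block π) :
    ∃ W : Block π, IsOuter π W.val ∧ Nested A.val W.val := by
  obtain ⟨W, hAW, hWmax⟩ := Set.exists_max_image {B : Block π | Nested A.val B.val} Block.width
    (Set.toFinite _) ⟨A, nested_refl A.val⟩
  refine ⟨W, ⟨W.2, fun V hV hWV => ?_⟩, hAW⟩
  have hAV : Nested A.val V := nested_trans hAW hWV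
  exact congrArg Subtype.val
    (eq_of_nested_of_width_le (B := ⟨V, hV⟩) hWV (hWmax ⟨V, hV⟩ hAV)).symm

end NCPart

namespace IsNoncrossing

open NCPart

variable {n : ℕ} {π : NCPart n}

lemma nested_or_nested (hπ : IsNoncrossing π) {B C : Block π}
    (h₁ : B.min ≤ C.min) (h₂ : C.min ≤ B.max) : Nested C.val B.val ∨ Nested B.val C.val := by
  rcases le_or_gt C.max B.max with h₃ | h₃
  · exact .inl ((nested_iff C B).2 ⟨h₁, h₃⟩)
  by_cases hBC : B = C
  · exact .inl (hBC ▸ nested_refl B.val)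
  have h₁' : B.min < C.min := h₁.lt_of_ne fun h => hBC (Block.eq_of_min_eq h)
  have h₂' : C.min < B.max :=
    h₂.lt_of_ne fun h => hBC (Block.eq_of_mem_of_mem B.max_mem (h ▸ C.min_mem))
  obtain ⟨D, hD, hBD, hCD⟩ := hπ _ _ _ _ h₁' h₂' h₃
    ⟨B.val, B.2, B.min_mem, B.max_mem⟩ ⟨C.val, C.2, C.min_mem, C.max_mem⟩
  exact absurd ((Block.eq_of_mem_of_mem (B := ⟨D, hD⟩) B.min_mem hBD).trans
    (Block.eq_of_mem_of_mem (A := ⟨D, hD⟩) hCD C.min_mem)) hBC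

lemma nested_total_of_nested (hπ : IsNoncrossing π) {A B C : Block π}
    (hAB : Nested A.val B.val) (hAC : Nested A.val C.val) :
    Nested B.val C.val ∨ Nested C.val B.val := by
  rw [nested_iff] at hAB hAC
  rcases le_total B.min C.min with h | h
  · exact (hπ.nested_or_nested h (hAC.1.trans (A.min_le_max.trans hAB.2))).symm
  · exact hπ.nested_or_nested h (hAB.1.trans (A.min_le_max.trans hAC.2))

lemma exists_least_mem_nested (hπ : IsNoncrossing π) {M : Set (Block π)}
    (hM : ∀ B : Block π, IsOuter π B.val → B ∈ M) (A : Block π) :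
    ∃ B ∈ M, Nested A.val B.val ∧ ∀ C ∈ M, Nested A.val C.val → Nested B.val C.val := by
  obtain ⟨W, hW, hAW⟩ := exists_isOuter_nested A
  obtain ⟨B, ⟨hBM, hAB⟩, hBmin⟩ := Set.exists_min_image {B | B ∈ M ∧ Nested A.val B.val}
    Block.width (Set.toFinite _) ⟨W, hM W hW, hAW⟩
  refine ⟨B, hBM, hAB, fun C hCM hAC => ?_⟩
  rcases hπ.nested_total_of_nested hAB hAC with hBC | hCB
  · exact hBC
  · rw [eq_of_nested_of_width_le hCB (hBmin C ⟨hCM, hAC⟩)]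
    exact nested_refl B.val

end IsNoncrossing

namespace BlockProjection

open NCPart

variable {n : ℕ} {π : NCPart n}

lemma toFun_injective : Function.Injective (toFun : BlockProjection π → _) := by
  rintro ⟨Φ, _, _, _⟩ ⟨Ψ, _, _, _⟩ rfl
  rfl

lemma nested_apply_of_mem_range (Φ : BlockProjection π) {A C : Block π}
    (hC : C ∈ Set.range Φ.toFun) (hAC : Nested A.val C.val) : Nested (Φ.toFun A).val C.val := by
  obtain ⟨C, rfl⟩ := hC
  simpa only [Φ.idem] using Φ.mono _ _ hAC

lemma eq_of_range_eq {Φ Ψ : BlockProjection π} (h : Set.range Φ.toFun = Set.range Ψ.toFun) :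
    Φ = Ψ :=
  toFun_injective <| funext fun A => nested_antisymm
    (Φ.nested_apply_of_mem_range (h ▸ ⟨A, rfl⟩) (Ψ.le_apply A))
    (Ψ.nested_apply_of_mem_range (h ▸ ⟨A, rfl⟩) (Φ.le_apply A))

lemma exists_range_eq_of_exists_least {M : Set (Block π)}
    (hM : ∀ A : Block π, ∃ B ∈ M, Nested A.val B.val ∧
      ∀ C ∈ M, Nested A.val C.val → Nested B.val C.val) :
    ∃ Φ : BlockProjection π, Set.range Φ.toFun = M := by
  choose f hfM hle hleast using hM
  have hfix : ∀ B ∈ M, f B = B := fun B hB =>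
    nested_antisymm (hleast B B hB (nested_refl B.val)) (hle B)
  refine ⟨⟨f, fun A => hfix _ (hfM A),
    fun A B hAB => hleast A (f B) (hfM B) (nested_trans hAB (hle B)), hle⟩, ?_⟩
  ext B
  exact ⟨by rintro ⟨A, rfl⟩; exact hfM A, fun hB => ⟨B, hfix B hB⟩⟩

end BlockProjection

/-- For any set `M` of blocks of a non-crossing partition containing all outer blocks,
there is a unique block-projection with range `M`. -/
theorem blockProjection_existsUnique (n : ℕ) (π : NCPart n) (hπ : IsNoncrossing π)
    (M : Set {B : Finset (Fin n) // B ∈ π.parts})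
    (hM : ∀ B : {B : Finset (Fin n) // B ∈ π.parts}, IsOuter π B.val → B ∈ M) :
    ∃! Φ : BlockProjection π, Set.range Φ.toFun = M := by
  obtain ⟨Φ, hΦ⟩ :=
    BlockProjection.exists_range_eq_of_exists_least (hπ.exists_least_mem_nested hM)
  exact ⟨Φ, hΦ, fun Ψ hΨ => BlockProjection.eq_of_range_eq (hΨ.trans hΦ.symm)⟩
end

section
/- Let m, s be positive integers and let c : {1,...,m} → {1,...,s} be a colouring. Write NC(m;c) for the set of non-crossing partitions σ of {1,...,m} such that c is constant on every block of σ. Then for every σ ∈ NC(m;c) there exists a unique τ ∈ NC(m;c) such that σ ≪ τ and τ has the vertical no-repeat property (VNRP) with respect to c. -/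
open Finset

section VnrpAux

open Finpartition

variable {m s : ℕ}

/-- `i` lies in the interval hull of `B`. -/
def memHull (B : Finset (Fin m)) (i : Fin m) : Prop :=
  (∃ a ∈ B, a ≤ i) ∧ (∃ b ∈ B, i ≤ b)

lemma memHull_of_mem {B : Finset (Fin m)} {i : Fin m} (h : i ∈ B) : memHull B i :=
  ⟨⟨i, h, le_rfl⟩, ⟨i, h, le_rfl⟩⟩

lemma memHull_iff {B : Finset (Fin m)} (hB : B.Nonempty) {i : Fin m} :
    memHull B i ↔ B.min' hB ≤ i ∧ i ≤ B.max' hB := by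
  constructor
  · rintro ⟨⟨a, ha, hai⟩, ⟨b, hb, hib⟩⟩
    exact ⟨le_trans (Finset.min'_le _ _ ha) hai, le_trans hib (Finset.le_max' _ _ hb)⟩
  · rintro ⟨h1, h2⟩
    exact ⟨⟨_, B.min'_mem hB, h1⟩, ⟨_, B.max'_mem hB, h2⟩⟩

lemma nested_refl (B : Finset (Fin m)) : Nested B B := ⟨le_rfl, le_rfl⟩

lemma nested_iff {V W : Finset (Fin m)} (hV : V.Nonempty) (hW : W.Nonempty) :
    Nested V W ↔ W.min' hW ≤ V.min' hV ∧ V.max' hV ≤ W.max' hW := by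
  unfold Nested
  rw [← Finset.coe_min' hV, ← Finset.coe_min' hW, ← Finset.coe_max' hV, ← Finset.coe_max' hW]
  exact and_congr WithTop.coe_le_coe WithBot.coe_le_coe

lemma nested_trans {A B C : Finset (Fin m)} (h1 : Nested A B) (h2 : Nested B C) :
    Nested A C :=
  ⟨le_trans h2.1 h1.1, le_trans h1.2 h2.2⟩

lemma memHull_mono {B C : Finset (Fin m)} (hB : B.Nonempty) (hC : C.Nonempty)
    (h : Nested B C) {i : Fin m} (hi : memHull B i) : memHull C i := by
  rw [memHull_iff hB] at hi
  rw [memHull_iff hC]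
  rw [nested_iff hB hC] at h
  exact ⟨le_trans h.1 hi.1, le_trans hi.2 h.2⟩

lemma part_nonempty {π : NCPart m} {B : Finset (Fin m)} (hB : B ∈ π.parts) : B.Nonempty :=
  π.nonempty_of_mem_parts hB

/-- Two blocks whose hulls share a common minimum are equal. -/
lemma eq_of_nested_nested {π : NCPart m} {B C : Finset (Fin m)} (hB : B ∈ π.parts)
    (hC : C ∈ π.parts) (h1 : Nested B C) (h2 : Nested C B) : B = C := by
  have hBne := part_nonempty hB
  have hCne := part_nonempty hC
  rw [nested_iff hBne hCne] at h1
  rw [nested_iff hCne hBne] at h2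
  have : B.min' hBne = C.min' hCne := le_antisymm h2.1 h1.1
  exact π.eq_of_mem_parts hB hC (B.min'_mem hBne) (this ▸ C.min'_mem hCne)

/-- Key laminarity lemma: if `x ∈ X` lies in the hull of another block `W` of a
noncrossing partition, then the hull of `X` is contained in the hull of `W`. -/
lemma nested_of_mem_memHull {π : NCPart m} (hπ : IsNoncrossing π)
    {X W : Finset (Fin m)} (hX : X ∈ π.parts) (hW : W ∈ π.parts)
    {x : Fin m} (hx : x ∈ X) (hxW : memHull W x) : Nested X W := by
  have hXne := part_nonempty hX
  have hWne := part_nonempty hW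
  rw [memHull_iff hWne] at hxW
  rcases eq_or_lt_of_le hxW.1 with h1 | h1
  · -- x is the min of W, hence x ∈ W and X = W
    have : X = W := π.eq_of_mem_parts hX hW hx (h1 ▸ W.min'_mem hWne)
    exact this ▸ nested_refl X
  rcases eq_or_lt_of_le hxW.2 with h2 | h2
  · have : X = W := π.eq_of_mem_parts hX hW hx (h2 ▸ W.max'_mem hWne)
    exact this ▸ nested_refl X
  -- now min' W < x < max' W
  rw [nested_iff hXne hWne]
  constructor
  · by_contra hlt
    push_neg at hlt
    have h4 := hπ (X.min' hXne) (W.min' hWne) x (W.max' hWne) hlt h1 h2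
      ⟨X, hX, X.min'_mem hXne, hx⟩ ⟨W, hW, W.min'_mem hWne, W.max'_mem hWne⟩
    obtain ⟨D, hD, hD1, hD2⟩ := h4
    have e1 : D = X := π.eq_of_mem_parts hD hX hD1 (X.min'_mem hXne)
    have e2 : D = W := π.eq_of_mem_parts hD hW hD2 (W.min'_mem hWne)
    rw [e1] at e2
    subst e2
    exact lt_irrefl _ hlt
  · by_contra hlt
    push_neg at hlt
    have h4 := hπ (W.min' hWne) x (W.max' hWne) (X.max' hXne) h1 h2 hlt
      ⟨W, hW, W.min'_mem hWne, W.max'_mem hWne⟩ ⟨X, hX, hx, X.max'_mem hXne⟩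
    obtain ⟨D, hD, hD1, hD2⟩ := h4
    have e1 : D = W := π.eq_of_mem_parts hD hW hD1 (W.min'_mem hWne)
    have e2 : D = X := π.eq_of_mem_parts hD hX hD2 hx
    rw [e1] at e2
    subst e2
    exact lt_irrefl _ hlt

/-- Laminarity: two blocks whose hulls share a point are nested one way or the other. -/
lemma nested_total {π : NCPart m} (hπ : IsNoncrossing π)
    {B C : Finset (Fin m)} (hB : B ∈ π.parts) (hC : C ∈ π.parts)
    {x : Fin m} (hxB : memHull B x) (hxC : memHull C x) : Nested B C ∨ Nested C B := by
  have hBne := part_nonempty hB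
  have hCne := part_nonempty hC
  rw [memHull_iff hBne] at hxB
  rw [memHull_iff hCne] at hxC
  rcases le_total (C.min' hCne) (B.min' hBne) with h | h
  · left
    exact nested_of_mem_memHull hπ hB hC (B.min'_mem hBne)
      ((memHull_iff hCne).2 ⟨h, le_trans hxB.1 hxC.2⟩)
  · right
    exact nested_of_mem_memHull hπ hC hB (C.min'_mem hCne)
      ((memHull_iff hBne).2 ⟨h, le_trans hxC.1 hxB.2⟩)

end VnrpAux
section VnrpAux2

variable {m s : ℕ}

/-- `B` is a "good" block for `i`: its hull contains `i`, and every block of `σ`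
whose hull contains `i` and is nested in `B` has colour `c i`. -/
def GoodBlk (c : Fin m → Fin s) (σ : NCPart m) (i : Fin m) (B : Finset (Fin m)) : Prop :=
  B ∈ σ.parts ∧ memHull B i ∧
    ∀ B' ∈ σ.parts, memHull B' i → Nested B' B → ∀ k ∈ B', c k = c i

/-- `C` is the maximal good block for `i`. -/
def IsTopBlk (c : Fin m → Fin s) (σ : NCPart m) (i : Fin m) (C : Finset (Fin m)) : Prop :=
  GoodBlk c σ i C ∧ ∀ B, GoodBlk c σ i B → Nested B C

/-- The own block of `i` is good. -/
lemma goodBlk_self {c : Fin m → Fin s} {σ : NCPart m} (hσ : IsNoncrossing σ)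
    (hc : MonoChrome c σ) {B : Finset (Fin m)} (hB : B ∈ σ.parts) {i : Fin m}
    (hi : i ∈ B) : GoodBlk c σ i B := by
  refine ⟨hB, memHull_of_mem hi, ?_⟩
  intro B' hB' hmem hnest k hk
  have h1 : Nested B B' := nested_of_mem_memHull hσ hB hB' hi hmem
  have : B' = B := eq_of_nested_nested hB' hB hnest h1
  subst this
  exact hc B' hB' k hk i hi

lemma nested_of_le_card {σ : NCPart m} {B C : Finset (Fin m)}
    (hB : B ∈ σ.parts) (hC : C ∈ σ.parts) (hcomp : Nested B C ∨ Nested C B)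
    (hle : ((B.max' (part_nonempty hB) : ℕ) - (B.min' (part_nonempty hB) : ℕ)) ≤
      ((C.max' (part_nonempty hC) : ℕ) - (C.min' (part_nonempty hC) : ℕ))) :
    Nested B C := by
  rcases hcomp with h | h
  · exact h
  · -- Nested C B together with the size bound forces B = C
    have hBne := part_nonempty hB
    have hCne := part_nonempty hC
    have h' := (nested_iff hCne hBne).1 h
    have hmm : (B.min' hBne : ℕ) ≤ (B.max' hBne : ℕ) :=
      Fin.le_iff_val_le_val.1 (Finset.min'_le _ _ (B.max'_mem hBne))
    have hmm' : (C.min' hCne : ℕ) ≤ (C.max' hCne : ℕ) :=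
      Fin.le_iff_val_le_val.1 (Finset.min'_le _ _ (C.max'_mem hCne))
    have h1 : (B.min' hBne : ℕ) ≤ (C.min' hCne : ℕ) := Fin.le_iff_val_le_val.1 h'.1
    have h2 : (C.max' hCne : ℕ) ≤ (B.max' hBne : ℕ) := Fin.le_iff_val_le_val.1 h'.2
    have hmineq : (B.min' hBne : ℕ) = (C.min' hCne : ℕ) := by omega
    have : B = C := σ.eq_of_mem_parts hB hC (B.min'_mem hBne)
      ((Fin.ext hmineq : B.min' hBne = C.min' hCne) ▸ C.min'_mem hCne)
    subst this
    exact nested_refl B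

open Classical in
/-- Existence of the maximal good block. -/
lemma exists_topBlk {c : Fin m → Fin s} {σ : NCPart m} (hσ : IsNoncrossing σ)
    (hc : MonoChrome c σ) (i : Fin m) : ∃ C, IsTopBlk c σ i C := by
  classical
  set G := σ.parts.filter (fun B => GoodBlk c σ i B) with hG
  have hGne : G.Nonempty := by
    refine ⟨σ.part i, Finset.mem_filter.2 ⟨σ.part_mem.2 (Finset.mem_univ i), ?_⟩⟩
    exact goodBlk_self hσ hc (σ.part_mem.2 (Finset.mem_univ i)) (σ.mem_part (Finset.mem_univ i))
  obtain ⟨C, hCG, hmax⟩ := G.exists_max_image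
    (fun B => if h : B.Nonempty then ((B.max' h : ℕ) - (B.min' h : ℕ)) else 0) hGne
  rw [Finset.mem_filter] at hCG
  refine ⟨C, hCG.2, ?_⟩
  intro B hBgood
  have hBmem : B ∈ σ.parts := hBgood.1
  have hBG : B ∈ G := Finset.mem_filter.2 ⟨hBmem, hBgood⟩
  have hcomp : Nested B C ∨ Nested C B :=
    nested_total hσ hBmem hCG.1 hBgood.2.1 hCG.2.2.1
  have hle := hmax B hBG
  rw [dif_pos (part_nonempty hBmem), dif_pos (part_nonempty hCG.1)] at hle
  exact nested_of_le_card hBmem hCG.1 hcomp hle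

lemma topBlk_unique {c : Fin m → Fin s} {σ : NCPart m} {i : Fin m}
    {C C' : Finset (Fin m)} (h : IsTopBlk c σ i C) (h' : IsTopBlk c σ i C') : C = C' :=
  eq_of_nested_nested h.1.1 h'.1.1 (h'.2 C h.1) (h.2 C' h'.1)

open Classical in
/-- The maximal good block for `i` (well-defined when `σ` is noncrossing monochrome). -/
noncomputable def topBlk (c : Fin m → Fin s) (σ : NCPart m) (i : Fin m) : Finset (Fin m) :=
  if h : ∃ C, IsTopBlk c σ i C then Classical.choose h else ∅

open Classical in
lemma topBlk_spec {c : Fin m → Fin s} {σ : NCPart m} (hσ : IsNoncrossing σ)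
    (hc : MonoChrome c σ) (i : Fin m) : IsTopBlk c σ i (topBlk c σ i) := by
  rw [topBlk, dif_pos (exists_topBlk hσ hc i)]
  exact Classical.choose_spec (exists_topBlk hσ hc i)

lemma eq_topBlk {c : Fin m → Fin s} {σ : NCPart m} (hσ : IsNoncrossing σ)
    (hc : MonoChrome c σ) {i : Fin m} {C : Finset (Fin m)} (h : IsTopBlk c σ i C) :
    C = topBlk c σ i := topBlk_unique h (topBlk_spec hσ hc i)

end VnrpAux2
section VnrpAux3

variable {m s : ℕ} {c : Fin m → Fin s} {σ : NCPart m}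

lemma topBlk_mem (hσ : IsNoncrossing σ) (hc : MonoChrome c σ) (i : Fin m) :
    topBlk c σ i ∈ σ.parts := (topBlk_spec hσ hc i).1.1

lemma memHull_topBlk (hσ : IsNoncrossing σ) (hc : MonoChrome c σ) (i : Fin m) :
    memHull (topBlk c σ i) i := (topBlk_spec hσ hc i).1.2.1

lemma colour_topBlk (hσ : IsNoncrossing σ) (hc : MonoChrome c σ) (i : Fin m) :
    ∀ k ∈ topBlk c σ i, c k = c i := by
  have h := topBlk_spec hσ hc i
  exact h.1.2.2 _ h.1.1 h.1.2.1 (nested_refl _)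

/-- If `k` lies in the maximal good block of `i`, then they share that maximal block. -/
lemma topBlk_of_mem (hσ : IsNoncrossing σ) (hc : MonoChrome c σ) {i k : Fin m}
    (hk : k ∈ topBlk c σ i) : topBlk c σ k = topBlk c σ i := by
  set C := topBlk c σ i with hC
  have htop := topBlk_spec hσ hc i
  have hCmem : C ∈ σ.parts := htop.1.1
  have hck : c k = c i := colour_topBlk hσ hc i k hk
  refine (eq_topBlk hσ hc ⟨⟨hCmem, memHull_of_mem hk, ?_⟩, ?_⟩).symm
  · -- goodness of C for k
    intro B' hB' hmem hnest x hx
    have h1 : Nested C B' := nested_of_mem_memHull hσ hCmem hB' hk hmem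
    have : B' = C := eq_of_nested_nested hB' hCmem hnest h1
    subst this
    rw [colour_topBlk hσ hc i x hx, hck]
  · -- maximality for k
    intro B hBgood
    rcases nested_total hσ hBgood.1 hCmem hBgood.2.1 (memHull_of_mem hk) with h | h
    · exact h
    · -- Nested C B : show B is good for i, conclude by maximality of C
      refine htop.2 B ⟨hBgood.1, ?_, ?_⟩
      · exact memHull_mono (part_nonempty hCmem) (part_nonempty hBgood.1) h
          (memHull_topBlk hσ hc i)
      · intro B'' hB'' hmem'' hnest'' x hx
        rcases nested_total hσ hB'' hCmem hmem'' (memHull_topBlk hσ hc i) with h2 | h2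
        · exact htop.1.2.2 B'' hB'' hmem'' h2 x hx
        · have hmk : memHull B'' k :=
            memHull_mono (part_nonempty hCmem) (part_nonempty hB'') h2 (memHull_of_mem hk)
          rw [hBgood.2.2 B'' hB'' hmk hnest'' x hx, hck]

/-- Points in the same block of `σ` have the same maximal good block. -/
lemma topBlk_congr (hσ : IsNoncrossing σ) (hc : MonoChrome c σ) {B : Finset (Fin m)}
    (hB : B ∈ σ.parts) {i j : Fin m} (hi : i ∈ B) (hj : j ∈ B) :
    topBlk c σ i = topBlk c σ j := by
  set C := topBlk c σ i with hC
  have htop := topBlk_spec hσ hc i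
  have hCmem : C ∈ σ.parts := htop.1.1
  have hij : c i = c j := hc B hB i hi j hj
  have hBC : Nested B C := htop.2 B (goodBlk_self hσ hc hB hi)
  have hmemj : memHull C j :=
    memHull_mono (part_nonempty hB) (part_nonempty hCmem) hBC (memHull_of_mem hj)
  -- auxiliary: any block in the chain of j is B itself or contains B's hull
  have haux : ∀ B' ∈ σ.parts, memHull B' j → B' = B ∨ Nested B B' := by
    intro B' hB' hmem
    rcases nested_total hσ hB' hB hmem (memHull_of_mem hj) with h | h
    · left
      exact eq_of_nested_nested hB' hB h (nested_of_mem_memHull hσ hB hB' hj hmem)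
    · right; exact h
  refine eq_topBlk hσ hc ⟨⟨hCmem, hmemj, ?_⟩, ?_⟩
  · intro B' hB' hmem hnest x hx
    rcases haux B' hB' hmem with rfl | h
    · rw [hc B' hB' x hx j hj]
    · have hmemi : memHull B' i :=
        memHull_mono (part_nonempty hB) (part_nonempty hB') h (memHull_of_mem hi)
      rw [htop.1.2.2 B' hB' hmemi hnest x hx, hij]
  · -- maximality for j
    intro B' hBgood'
    -- show B' is good for i
    refine htop.2 B' ⟨hBgood'.1, ?_, ?_⟩
    · rcases haux B' hBgood'.1 hBgood'.2.1 with rfl | h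
      · exact memHull_of_mem hi
      · exact memHull_mono (part_nonempty hB) (part_nonempty hBgood'.1) h (memHull_of_mem hi)
    · intro B'' hB'' hmem'' hnest'' x hx
      rcases nested_total hσ hB'' hB hmem'' (memHull_of_mem hi) with h2 | h2
      · have : B'' = B :=
          eq_of_nested_nested hB'' hB h2 (nested_of_mem_memHull hσ hB hB'' hi hmem'')
        subst this
        exact hc B'' hB'' x hx i hi
      · have hmemj'' : memHull B'' j :=
          memHull_mono (part_nonempty hB) (part_nonempty hB'') h2 (memHull_of_mem hj)
        rw [hBgood'.2.2 B'' hB'' hmemj'' hnest'' x hx, hij]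

end VnrpAux3
section VnrpAux4

variable {m s : ℕ} {c : Fin m → Fin s} {σ : NCPart m}

open Classical in
/-- The VNRP closure of `σ`: group together points with the same maximal good block. -/
noncomputable def tauVNRP (c : Fin m → Fin s) (σ : NCPart m) : NCPart m :=
  Finpartition.ofSetoid (Setoid.ker (topBlk c σ))

open Classical in
lemma mem_part_tau {i j : Fin m} :
    j ∈ (tauVNRP c σ).part i ↔ topBlk c σ i = topBlk c σ j := by
  rw [tauVNRP]
  exact Finpartition.mem_part_ofSetoid_iff_rel

lemma part_tau_mem (i : Fin m) : (tauVNRP c σ).part i ∈ (tauVNRP c σ).parts :=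
  (tauVNRP c σ).part_mem.2 (Finset.mem_univ i)

lemma mem_part_tau_self (i : Fin m) : i ∈ (tauVNRP c σ).part i :=
  (tauVNRP c σ).mem_part (Finset.mem_univ i)

lemma exists_rep {π : NCPart m} {A : Finset (Fin m)} (hA : A ∈ π.parts) :
    ∃ x ∈ A, A = π.part x := by
  obtain ⟨x, hx⟩ := part_nonempty hA
  exact ⟨x, hx, (π.part_eq_of_mem hA hx).symm⟩

lemma sameBlock_iff_part {π : NCPart m} {i j : Fin m} :
    SameBlock π i j ↔ j ∈ π.part i := by
  constructor
  · rintro ⟨B, hB, hiB, hjB⟩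
    rw [π.part_eq_of_mem hB hiB]
    exact hjB
  · intro h
    exact ⟨π.part i, π.part_mem.2 (Finset.mem_univ i), π.mem_part (Finset.mem_univ i), h⟩

lemma sameBlock_tau {i j : Fin m} :
    SameBlock (tauVNRP c σ) i j ↔ topBlk c σ i = topBlk c σ j := by
  rw [sameBlock_iff_part, mem_part_tau]

lemma topBlk_subset_part (hσ : IsNoncrossing σ) (hc : MonoChrome c σ) (i : Fin m) :
    topBlk c σ i ⊆ (tauVNRP c σ).part i := by
  intro k hk
  rw [mem_part_tau]
  exact (topBlk_of_mem hσ hc hk).symm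

lemma part_subset_hull (hσ : IsNoncrossing σ) (hc : MonoChrome c σ) {i j : Fin m}
    (hj : j ∈ (tauVNRP c σ).part i) : memHull (topBlk c σ i) j := by
  rw [mem_part_tau] at hj
  rw [hj]
  exact memHull_topBlk hσ hc j

lemma part_tau_nonempty (i : Fin m) : ((tauVNRP c σ).part i).Nonempty :=
  ⟨i, mem_part_tau_self i⟩

/-- The hull of a τ-block equals the hull of the corresponding maximal good block. -/
lemma part_tau_min' (hσ : IsNoncrossing σ) (hc : MonoChrome c σ) (i : Fin m) :
    ((tauVNRP c σ).part i).min' (part_tau_nonempty i) =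
      (topBlk c σ i).min' (part_nonempty (topBlk_mem hσ hc i)) := by
  apply le_antisymm
  · exact Finset.min'_le _ _ (topBlk_subset_part hσ hc i
      ((topBlk c σ i).min'_mem (part_nonempty (topBlk_mem hσ hc i))))
  · apply Finset.le_min'
    intro y hy
    have := (memHull_iff (part_nonempty (topBlk_mem hσ hc i))).1 (part_subset_hull hσ hc hy)
    exact this.1

lemma part_tau_max' (hσ : IsNoncrossing σ) (hc : MonoChrome c σ) (i : Fin m) :
    ((tauVNRP c σ).part i).max' (part_tau_nonempty i) =
      (topBlk c σ i).max' (part_nonempty (topBlk_mem hσ hc i)) := by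
  apply le_antisymm
  · apply Finset.max'_le
    intro y hy
    have := (memHull_iff (part_nonempty (topBlk_mem hσ hc i))).1 (part_subset_hull hσ hc hy)
    exact this.2
  · exact Finset.le_max' _ _ (topBlk_subset_part hσ hc i
      ((topBlk c σ i).max'_mem (part_nonempty (topBlk_mem hσ hc i))))

/-- A Finpartition is determined by its parts. -/
lemma Finpartition.eq_of_parts_eq {α : Type*} [Lattice α] [OrderBot α] {a : α}
    {P Q : Finpartition a} (h : P.parts = Q.parts) : P = Q := by
  cases P; cases Q
  simpa using h

end VnrpAux4
section VnrpAux5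

variable {m s : ℕ} {c : Fin m → Fin s} {σ : NCPart m}

lemma colour_eq_of_topBlk_eq (hσ : IsNoncrossing σ) (hc : MonoChrome c σ) {i j : Fin m}
    (h : topBlk c σ i = topBlk c σ j) : c i = c j := by
  have hne := part_nonempty (topBlk_mem hσ hc i)
  set k0 := (topBlk c σ i).min' hne with hk0
  have h1 : c k0 = c i := colour_topBlk hσ hc i _ ((topBlk c σ i).min'_mem hne)
  have h2 : c k0 = c j := colour_topBlk hσ hc j _ (h ▸ (topBlk c σ i).min'_mem hne)
  rw [← h1, h2]

lemma tau_monochrome (hσ : IsNoncrossing σ) (hc : MonoChrome c σ) :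
    MonoChrome c (tauVNRP c σ) := by
  intro B hB i hi j hj
  exact colour_eq_of_topBlk_eq hσ hc
    (sameBlock_tau.1 ⟨B, hB, hi, hj⟩)

lemma tau_noncrossing (hσ : IsNoncrossing σ) (hc : MonoChrome c σ) :
    IsNoncrossing (tauVNRP c σ) := by
  intro i1 i2 i3 i4 h12 h23 h34 h13 h24
  rw [sameBlock_tau] at h13 h24 ⊢
  set C := topBlk c σ i1 with hC
  set D := topBlk c σ i2 with hD
  have hCmem : C ∈ σ.parts := topBlk_mem hσ hc i1
  have hDmem : D ∈ σ.parts := topBlk_mem hσ hc i2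
  have hCne := part_nonempty hCmem
  have hDne := part_nonempty hDmem
  have hmC1 : memHull C i1 := memHull_topBlk hσ hc i1
  have hmC3 : memHull C i3 := h13 ▸ memHull_topBlk hσ hc i3
  have hmD2 : memHull D i2 := memHull_topBlk hσ hc i2
  have hmD4 : memHull D i4 := h24 ▸ memHull_topBlk hσ hc i4
  have hmC2 : memHull C i2 := by
    rw [memHull_iff hCne] at hmC1 hmC3 ⊢
    exact ⟨le_trans hmC1.1 (le_of_lt h12), le_trans (le_of_lt h23) hmC3.2⟩
  have hmD3 : memHull D i3 := by
    rw [memHull_iff hDne] at hmD2 hmD4 ⊢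
    exact ⟨le_trans hmD2.1 (le_of_lt h23), le_trans (le_of_lt h34) hmD4.2⟩
  have hTi3 : topBlk c σ i3 = C := h13.symm
  have hTi2 : topBlk c σ i2 = D := rfl
  rcases nested_total hσ hCmem hDmem hmC2 hmD2 with hcase | hcase
  · -- Nested C D : show D is good for i1
    have hgood : GoodBlk c σ i1 D := by
      refine ⟨hDmem, memHull_mono hCne hDne hcase hmC1, ?_⟩
      intro B hB hmem1 hnest x hx
      rcases nested_total hσ hB hCmem hmem1 hmC1 with h2 | h2
      · exact (topBlk_spec hσ hc i1).1.2.2 B hB hmem1 h2 x hx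
      · have hmem2 : memHull B i2 :=
          memHull_mono hCne (part_nonempty hB) h2 hmC2
        have hx2 : c x = c i2 := (topBlk_spec hσ hc i2).1.2.2 B hB hmem2 hnest x hx
        have hC2 : ∀ k ∈ C, c k = c i2 :=
          (topBlk_spec hσ hc i2).1.2.2 C hCmem hmC2 hcase
        have h21 : c i2 = c i1 := by
          rw [← hC2 _ (C.min'_mem hCne), colour_topBlk hσ hc i1 _ (C.min'_mem hCne)]
        rw [hx2, h21]
    have := (topBlk_spec hσ hc i1).2 D hgood
    exact eq_of_nested_nested hCmem hDmem hcase this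
  · -- Nested D C : show C is good for i2
    have hgood : GoodBlk c σ i2 C := by
      refine ⟨hCmem, hmC2, ?_⟩
      intro B hB hmem2 hnest x hx
      rcases nested_total hσ hB hDmem hmem2 hmD2 with h2 | h2
      · exact (topBlk_spec hσ hc i2).1.2.2 B hB hmem2 h2 x hx
      · have hmem3 : memHull B i3 :=
          memHull_mono hDne (part_nonempty hB) h2 hmD3
        have hx3 : c x = c i3 := by
          have := (topBlk_spec hσ hc i3).1.2.2 B hB hmem3 (by rw [hTi3]; exact hnest) x hx
          exact this
        have hD3 : ∀ k ∈ D, c k = c i3 :=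
          (topBlk_spec hσ hc i3).1.2.2 D hDmem hmD3 (by rw [hTi3]; exact hcase)
        have h32 : c i3 = c i2 := by
          rw [← hD3 _ (D.min'_mem hDne), colour_topBlk hσ hc i2 _ (D.min'_mem hDne)]
        rw [hx3, h32]
    have := (topBlk_spec hσ hc i2).2 C hgood
    exact eq_of_nested_nested hCmem hDmem this hcase

lemma tau_LL (hσ : IsNoncrossing σ) (hc : MonoChrome c σ) : LL σ (tauVNRP c σ) := by
  constructor
  · intro B hB
    obtain ⟨x, hx⟩ := part_nonempty hB
    refine ⟨(tauVNRP c σ).part x, part_tau_mem x, ?_⟩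
    intro y hy
    rw [mem_part_tau]
    exact topBlk_congr hσ hc hB hx hy
  · intro W hW
    obtain ⟨x, hx, rfl⟩ := exists_rep hW
    have hVmem := topBlk_mem hσ hc x
    have hVne := part_nonempty hVmem
    refine ⟨topBlk c σ x, hVmem, topBlk_subset_part hσ hc x, ?_, ?_⟩
    · rw [← Finset.coe_min' hVne, ← Finset.coe_min' (part_tau_nonempty x),
        part_tau_min' hσ hc x]
    · rw [← Finset.coe_max' hVne, ← Finset.coe_max' (part_tau_nonempty x),
        part_tau_max' hσ hc x]

lemma nested_part_tau_iff (hσ : IsNoncrossing σ) (hc : MonoChrome c σ) (x y : Fin m) :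
    Nested ((tauVNRP c σ).part x) ((tauVNRP c σ).part y) ↔
      Nested (topBlk c σ x) (topBlk c σ y) := by
  rw [nested_iff (part_tau_nonempty x) (part_tau_nonempty y),
    nested_iff (part_nonempty (topBlk_mem hσ hc x)) (part_nonempty (topBlk_mem hσ hc y)),
    part_tau_min' hσ hc x, part_tau_min' hσ hc y, part_tau_max' hσ hc x,
    part_tau_max' hσ hc y]

end VnrpAux5
section VnrpAux6

variable {m s : ℕ} {c : Fin m → Fin s} {σ : NCPart m}

lemma tau_vnrp (hσ : IsNoncrossing σ) (hc : MonoChrome c σ) : VNRP c (tauVNRP c σ) := by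
  intro V P hV hpar x hx y hy hxy
  obtain ⟨hPmem, hVP, hno⟩ := hpar
  have hVx : (tauVNRP c σ).part x = V := (tauVNRP c σ).part_eq_of_mem hV hx
  have hPy : (tauVNRP c σ).part y = P := (tauVNRP c σ).part_eq_of_mem hPmem hy
  set C := topBlk c σ x with hCdef
  set E := topBlk c σ y with hEdef
  have hCmem : C ∈ σ.parts := topBlk_mem hσ hc x
  have hEmem : E ∈ σ.parts := topBlk_mem hσ hc y
  have hCne := part_nonempty hCmem
  have hEne := part_nonempty hEmem
  -- C ≠ E
  have hCE_ne : C ≠ E := by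
    intro h
    have : x ∈ (tauVNRP c σ).part y := mem_part_tau.2 h.symm
    rw [hPy] at this
    exact hVP.2 ((tauVNRP c σ).eq_of_mem_parts hV hPmem hx this)
  -- Nested C E
  have hCE : Nested C E := by
    rw [← nested_part_tau_iff hσ hc, hVx, hPy]
    exact hVP.1
  set i := C.min' hCne with hidef
  have hiC : i ∈ C := C.min'_mem hCne
  have hTi : topBlk c σ i = C := topBlk_of_mem hσ hc hiC
  have hci : c i = c x := colour_topBlk hσ hc x i hiC
  -- E is not good for i
  have hnotgood : ¬ GoodBlk c σ i E := by
    intro hgood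
    have h1 := (topBlk_spec hσ hc i).2 E hgood
    rw [hTi] at h1
    exact hCE_ne (eq_of_nested_nested hCmem hEmem hCE h1)
  have hmemEi : memHull E i := memHull_mono hCne hEne hCE (memHull_of_mem hiC)
  have h3 : ¬ ∀ B' ∈ σ.parts, memHull B' i → Nested B' E → ∀ k ∈ B', c k = c i :=
    fun h => hnotgood ⟨hEmem, hmemEi, h⟩
  push_neg at h3
  obtain ⟨B, hB, hmemBi, hnestBE, k, hkB, hk⟩ := h3
  have hBne := part_nonempty hB
  -- Nested C B (and not Nested B C)
  have hCB : Nested C B := by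
    rcases nested_total hσ hB hCmem hmemBi (memHull_of_mem hiC) with h | h
    · exfalso
      apply hk
      exact (topBlk_spec hσ hc i).1.2.2 B hB hmemBi (by rw [hTi]; exact h) k hkB
    · exact h
  have hBC_ne : B ≠ C := by
    intro h
    subst h
    exact hk (colour_topBlk hσ hc i k (by rw [hTi]; exact hkB))
  set j := B.min' hBne with hjdef
  have hjB : j ∈ B := B.min'_mem hBne
  set D := topBlk c σ j with hDdef
  have hDmem : D ∈ σ.parts := topBlk_mem hσ hc j
  have hBD : Nested B D := (topBlk_spec hσ hc j).2 B (goodBlk_self hσ hc hB hjB)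
  have hmemEj : memHull E j := memHull_mono hBne hEne hnestBE (memHull_of_mem hjB)
  -- ¬ Nested E D
  have hnotED : ¬ Nested E D := by
    intro hED
    have hcolE : ∀ k' ∈ E, c k' = c j :=
      (topBlk_spec hσ hc j).1.2.2 E hEmem hmemEj hED
    have hcolB : ∀ k' ∈ B, c k' = c j :=
      (topBlk_spec hσ hc j).1.2.2 B hB (memHull_of_mem hjB) hBD
    have hyj : c y = c j := by
      rw [← colour_topBlk hσ hc y _ (E.min'_mem hEne), hcolE _ (E.min'_mem hEne)]
    apply hk
    rw [hcolB k hkB, ← hyj, ← hxy, ← hci]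
  have hDE : Nested D E := by
    rcases nested_total hσ hDmem hEmem (memHull_topBlk hσ hc j) hmemEj with h | h
    · exact h
    · exact absurd h hnotED
  have hDE_ne : D ≠ E := fun h => hnotED (h ▸ nested_refl D)
  -- the block of j in τ lies strictly between V and P
  apply hno
  refine ⟨(tauVNRP c σ).part j, part_tau_mem j, ⟨?_, ?_⟩, ⟨?_, ?_⟩⟩
  · rw [← hVx, nested_part_tau_iff hσ hc]
    exact nested_trans hCB hBD
  · intro h
    rw [← hVx] at h
    have : j ∈ (tauVNRP c σ).part x := h ▸ mem_part_tau_self j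
    have hCD : C = D := (mem_part_tau.1 this)
    exact hBC_ne (eq_of_nested_nested hB hCmem (hCD ▸ hBD) hCB)
  · rw [← hPy, nested_part_tau_iff hσ hc]
    exact hDE
  · intro h
    rw [← hPy] at h
    have : j ∈ (tauVNRP c σ).part y := h ▸ mem_part_tau_self j
    exact hDE_ne (mem_part_tau.1 this).symm

end VnrpAux6
section VnrpAux7

variable {m s : ℕ} {c : Fin m → Fin s} {σ : NCPart m}

lemma nested_of_subset {B C : Finset (Fin m)} (hB : B.Nonempty) (h : B ⊆ C) :
    Nested B C := by
  have hC : C.Nonempty := hB.mono h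
  rw [nested_iff hB hC]
  exact ⟨Finset.min'_subset hB h, Finset.max'_subset hB h⟩

open Classical in
/-- Every strictly nested block has a parent, nested in any given strict superblock. -/
lemma exists_parent {π : NCPart m} (hπ : IsNoncrossing π) {W X : Finset (Fin m)}
    (hW : W ∈ π.parts) (hX : X ∈ π.parts) (hWX : StrictNested W X) :
    ∃ P, IsParent π W P ∧ Nested P X := by
  classical
  set S := π.parts.filter (fun Y => StrictNested W Y) with hS
  have hXS : X ∈ S := Finset.mem_filter.2 ⟨hX, hWX⟩
  obtain ⟨P, hPS, hmin⟩ := S.exists_min_image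
    (fun Y => if h : Y.Nonempty then ((Y.max' h : ℕ) - (Y.min' h : ℕ)) else 0) ⟨X, hXS⟩
  rw [Finset.mem_filter] at hPS
  obtain ⟨hPmem, hWP⟩ := hPS
  have hWne := part_nonempty hW
  have key : ∀ Y ∈ S, Nested P Y := by
    intro Y hY
    rw [Finset.mem_filter] at hY
    have hmemP : memHull P (W.min' hWne) :=
      memHull_mono hWne (part_nonempty hPmem) hWP.1 (memHull_of_mem (W.min'_mem hWne))
    have hmemY : memHull Y (W.min' hWne) :=
      memHull_mono hWne (part_nonempty hY.1) hY.2.1 (memHull_of_mem (W.min'_mem hWne))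
    have hcomp := nested_total hπ hPmem hY.1 hmemP hmemY
    have hle := hmin Y (Finset.mem_filter.2 hY)
    rw [dif_pos (part_nonempty hPmem), dif_pos (part_nonempty hY.1)] at hle
    exact nested_of_le_card hPmem hY.1 hcomp hle
  refine ⟨P, ⟨hPmem, hWP, ?_⟩, key X hXS⟩
  rintro ⟨X', hX', h1, h2⟩
  have hX'S : X' ∈ S := Finset.mem_filter.2 ⟨hX', h1⟩
  exact h2.2 (eq_of_nested_nested hX' hPmem h2.1 (key X' hX'S))

/-- If a σ-block's hull is inside the hull of the τ'-block of `i`, the whole σ-block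
lies in that τ'-block. -/
lemma block_subset_of_hull_subset {τ2 : NCPart m} (h1 : IsNoncrossing τ2)
    (hRef : Refines σ τ2) {W : Finset (Fin m)} (hW : W ∈ τ2.parts) {i : Fin m}
    (hi : i ∈ W) {B : Finset (Fin m)} (hB : B ∈ σ.parts) (hmem : memHull B i)
    (hsub : Nested B W) : B ⊆ W := by
  obtain ⟨WB, hWB, hBWB⟩ := hRef B hB
  have hBne := part_nonempty hB
  have hb : B.min' hBne ∈ WB := hBWB (B.min'_mem hBne)
  have hmemWb : memHull W (B.min' hBne) :=
    memHull_mono hBne (part_nonempty hW) hsub (memHull_of_mem (B.min'_mem hBne))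
  have hWBW : Nested WB W := nested_of_mem_memHull h1 hWB hW hb hmemWb
  have hmemWBi : memHull WB i :=
    memHull_mono hBne (part_nonempty hWB) (nested_of_subset hBne hBWB) hmem
  have hWWB : Nested W WB := nested_of_mem_memHull h1 hW hWB hi hmemWBi
  have : WB = W := eq_of_nested_nested hWB hW hWBW hWWB
  exact this ▸ hBWB

end VnrpAux7
section VnrpAux8

variable {m s : ℕ} {c : Fin m → Fin s} {σ : NCPart m}

lemma topBlk_eq_of_valid (hσ : IsNoncrossing σ) (hc : MonoChrome c σ) {τ2 : NCPart m}
    (h1 : IsNoncrossing τ2) (h2 : MonoChrome c τ2) (h3 : LL σ τ2) (h4 : VNRP c τ2)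
    {W V : Finset (Fin m)} (hW : W ∈ τ2.parts) (hV : V ∈ σ.parts) (hVW : V ⊆ W)
    (hmin : V.min = W.min) (hmax : V.max = W.max) {i : Fin m} (hi : i ∈ W) :
    topBlk c σ i = V := by
  have hVne := part_nonempty hV
  have hWne := part_nonempty hW
  have hmin' : V.min' hVne = W.min' hWne := by
    have h := hmin
    rw [← Finset.coe_min' hVne, ← Finset.coe_min' hWne] at h
    exact_mod_cast h
  have hmax' : V.max' hVne = W.max' hWne := by
    have h := hmax
    rw [← Finset.coe_max' hVne, ← Finset.coe_max' hWne] at h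
    exact_mod_cast h
  have hNV : ∀ A : Finset (Fin m), Nested A V ↔ Nested A W := by
    intro A; unfold Nested; rw [hmin, hmax]
  have hmemVi : memHull V i := by
    rw [memHull_iff hVne, hmin', hmax']
    exact (memHull_iff hWne).1 (memHull_of_mem hi)
  have hgoodV : GoodBlk c σ i V := by
    refine ⟨hV, hmemVi, ?_⟩
    intro B' hB' hmem' hnest' k hk
    have hsub : B' ⊆ W :=
      block_subset_of_hull_subset h1 h3.1 hW hi hB' hmem' ((hNV B').1 hnest')
    exact h2 W hW k (hsub hk) i hi
  refine (eq_topBlk hσ hc ⟨hgoodV, ?_⟩).symm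
  intro B hBgood
  obtain ⟨hB, hmemBi, hcolB'⟩ := hBgood
  have hBne := part_nonempty hB
  rcases nested_total hσ hB hV hmemBi hmemVi with hBV | hVB
  · exact hBV
  by_cases hBeqV : B = V
  · subst hBeqV; exact nested_refl B
  exfalso
  have hcolB : ∀ k ∈ B, c k = c i := hcolB' B hB hmemBi (nested_refl B)
  have hnotBV : ¬ Nested B V := fun h => hBeqV (eq_of_nested_nested hB hV h hVB)
  obtain ⟨WB, hWBmem, hBWB⟩ := h3.1 B hB
  have hWBne := part_nonempty hWBmem
  have hmemWBi : memHull WB i :=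
    memHull_mono hBne hWBne (nested_of_subset hBne hBWB) hmemBi
  have hWWB : Nested W WB := nested_of_mem_memHull h1 hW hWBmem hi hmemWBi
  have hWne_WB : W ≠ WB := by
    intro h
    exact hnotBV ((hNV B).2 (h ▸ nested_of_subset hBne hBWB))
  obtain ⟨P, hpar, hPWB⟩ := exists_parent h1 hW hWBmem ⟨hWWB, hWne_WB⟩
  have hdiff : ∀ a ∈ W, ∀ b ∈ P, c a ≠ c b := h4 W P hW hpar
  obtain ⟨hPmem, hWPstrict, -⟩ := hpar
  have hPne := part_nonempty hPmem
  by_cases hPWBeq : P = WB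
  · have hmem : B.min' hBne ∈ P := by rw [hPWBeq]; exact hBWB (B.min'_mem hBne)
    exact hdiff i hi _ hmem (hcolB _ (B.min'_mem hBne)).symm
  -- P ≠ WB : show the hull of P lies inside the hull of B
  have hshared : ∀ a : Fin m, a ∈ P → a ∈ WB → False := fun a ha1 ha2 =>
    hPWBeq (τ2.eq_of_mem_parts hPmem hWBmem ha1 ha2)
  have hPWB' := (nested_iff hPne hWBne).1 hPWB
  have hWP' := (nested_iff hWne hPne).1 hWPstrict.1
  have hVB' := (nested_iff hVne hBne).1 hVB
  have hBWB' := (nested_iff hBne hWBne).1 (nested_of_subset hBne hBWB)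
  have hWmm : W.min' hWne ≤ W.max' hWne := Finset.min'_le _ _ (W.max'_mem hWne)
  have hPB : Nested P B := by
    rw [nested_iff hPne hBne]
    by_contra hn
    push_neg at hn
    by_cases hcase : B.min' hBne ≤ P.min' hPne
    · -- then B.max' < P.max'
      have hlt3' : B.max' hBne < P.max' hPne := hn hcase
      have hlt1 : WB.min' hWBne < P.min' hPne := by
        rcases eq_or_lt_of_le hPWB'.1 with h | h
        · exfalso
          apply hshared (P.min' hPne) (P.min'_mem hPne)
          rw [← h]
          exact WB.min'_mem hWBne
        · exact h
      have hWmaxB : W.max' hWne ≤ B.max' hBne := by rw [← hmax']; exact hVB'.2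
      have hlt2 : P.min' hPne < B.max' hBne := by
        have hle : P.min' hPne ≤ B.max' hBne :=
          le_trans hWP'.1 (le_trans hWmm hWmaxB)
        rcases eq_or_lt_of_le hle with h | h
        · exfalso
          apply hshared (P.min' hPne) (P.min'_mem hPne)
          rw [h]
          exact hBWB (B.max'_mem hBne)
        · exact h
      obtain ⟨D, hD, hD1, hD2⟩ := h1 _ _ _ _ hlt1 hlt2 hlt3'
        ⟨WB, hWBmem, WB.min'_mem hWBne, hBWB (B.max'_mem hBne)⟩
        ⟨P, hPmem, P.min'_mem hPne, P.max'_mem hPne⟩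
      have e1 : D = WB := τ2.eq_of_mem_parts hD hWBmem hD1 (WB.min'_mem hWBne)
      have e2 : D = P := τ2.eq_of_mem_parts hD hPmem hD2 (P.min'_mem hPne)
      exact hshared _ (e2 ▸ hD2) (e1 ▸ hD2)
    · -- P.min' < B.min'
      have hlt1 : P.min' hPne < B.min' hBne := not_le.1 hcase
      have hBminW : B.min' hBne ≤ W.min' hWne := by rw [← hmin']; exact hVB'.1
      have hlt2 : B.min' hBne < P.max' hPne := by
        have hle : B.min' hBne ≤ P.max' hPne :=
          le_trans hBminW (le_trans hWmm hWP'.2)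
        rcases eq_or_lt_of_le hle with h | h
        · exfalso
          apply hshared (P.max' hPne) (P.max'_mem hPne)
          rw [← h]
          exact hBWB (B.min'_mem hBne)
        · exact h
      have hlt3' : P.max' hPne < WB.max' hWBne := by
        rcases eq_or_lt_of_le hPWB'.2 with h | h
        · exfalso
          apply hshared (P.max' hPne) (P.max'_mem hPne)
          rw [h]
          exact WB.max'_mem hWBne
        · exact h
      obtain ⟨D, hD, hD1, hD2⟩ := h1 _ _ _ _ hlt1 hlt2 hlt3'
        ⟨P, hPmem, P.min'_mem hPne, P.max'_mem hPne⟩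
        ⟨WB, hWBmem, hBWB (B.min'_mem hBne), WB.max'_mem hWBne⟩
      have e1 : D = P := τ2.eq_of_mem_parts hD hPmem hD1 (P.min'_mem hPne)
      have e2 : D = WB := τ2.eq_of_mem_parts hD hWBmem hD2 (hBWB (B.min'_mem hBne))
      exact hshared _ (e1 ▸ hD1) (e2 ▸ hD1)
  -- finish : the σ-block inside P has different colour, contradicting goodness of B
  obtain ⟨VP, hVPmem, hVPP, hVPmin, hVPmax⟩ := h3.2 P hPmem
  have hVPne := part_nonempty hVPmem
  have hmemPi : memHull P i :=
    memHull_mono hWne hPne hWPstrict.1 (memHull_of_mem hi)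
  have hVPmin' : VP.min' hVPne = P.min' hPne := by
    have h := hVPmin
    rw [← Finset.coe_min' hVPne, ← Finset.coe_min' hPne] at h
    exact_mod_cast h
  have hVPmax' : VP.max' hVPne = P.max' hPne := by
    have h := hVPmax
    rw [← Finset.coe_max' hVPne, ← Finset.coe_max' hPne] at h
    exact_mod_cast h
  have hmemVPi : memHull VP i := by
    rw [memHull_iff hVPne, hVPmin', hVPmax']
    exact (memHull_iff hPne).1 hmemPi
  have hVP_B : Nested VP B := by
    unfold Nested
    rw [hVPmin, hVPmax]
    exact hPB
  have := hcolB' VP hVPmem hmemVPi hVP_B (VP.min' hVPne) (VP.min'_mem hVPne)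
  exact hdiff i hi _ (hVPP (VP.min'_mem hVPne)) this.symm

end VnrpAux8
section VnrpAux9

variable {m s : ℕ} {c : Fin m → Fin s} {σ : NCPart m}

lemma tau_eq_of_valid (hσ : IsNoncrossing σ) (hc : MonoChrome c σ) {τ2 : NCPart m}
    (h1 : IsNoncrossing τ2) (h2 : MonoChrome c τ2) (h3 : LL σ τ2) (h4 : VNRP c τ2) :
    τ2 = tauVNRP c σ := by
  have keyT : ∀ i : Fin m, ∀ W ∈ τ2.parts, i ∈ W → topBlk c σ i ⊆ W := by
    intro i W hW hi
    obtain ⟨V, hVmem, hVW, hmin, hmax⟩ := h3.2 W hW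
    exact (topBlk_eq_of_valid hσ hc h1 h2 h3 h4 hW hVmem hVW hmin hmax hi) ▸ hVW
  have same1 : ∀ i j : Fin m, SameBlock τ2 i j → topBlk c σ i = topBlk c σ j := by
    rintro i j ⟨B, hB, hi, hj⟩
    obtain ⟨V, hVmem, hVW, hmin, hmax⟩ := h3.2 B hB
    rw [topBlk_eq_of_valid hσ hc h1 h2 h3 h4 hB hVmem hVW hmin hmax hi,
      topBlk_eq_of_valid hσ hc h1 h2 h3 h4 hB hVmem hVW hmin hmax hj]
  have same2 : ∀ i j : Fin m, topBlk c σ i = topBlk c σ j → SameBlock τ2 i j := by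
    intro i j h
    have hne := part_nonempty (topBlk_mem hσ hc i)
    set x := (topBlk c σ i).min' hne with hx
    have hxi : x ∈ τ2.part i :=
      (keyT i (τ2.part i) (τ2.part_mem.2 (Finset.mem_univ i))
        (τ2.mem_part (Finset.mem_univ i))) ((topBlk c σ i).min'_mem hne)
    have hxj : x ∈ τ2.part j :=
      (keyT j (τ2.part j) (τ2.part_mem.2 (Finset.mem_univ j))
        (τ2.mem_part (Finset.mem_univ j))) (h ▸ (topBlk c σ i).min'_mem hne)
    have hpp : τ2.part i = τ2.part j :=
      τ2.eq_of_mem_parts (τ2.part_mem.2 (Finset.mem_univ i))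
        (τ2.part_mem.2 (Finset.mem_univ j)) hxi hxj
    exact ⟨τ2.part i, τ2.part_mem.2 (Finset.mem_univ i), τ2.mem_part (Finset.mem_univ i),
      hpp ▸ τ2.mem_part (Finset.mem_univ j)⟩
  have hparts : ∀ x : Fin m, τ2.part x = (tauVNRP c σ).part x := by
    intro x
    ext y
    rw [mem_part_tau]
    constructor
    · intro hy
      exact same1 x y (sameBlock_iff_part.2 hy)
    · intro hy
      exact sameBlock_iff_part.1 (same2 x y hy)
  apply Finpartition.eq_of_parts_eq
  ext A
  constructor
  · intro hA
    obtain ⟨x, hx, rfl⟩ := exists_rep hA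
    rw [hparts x]
    exact part_tau_mem x
  · intro hA
    obtain ⟨x, hx, rfl⟩ := exists_rep hA
    rw [← hparts x]
    exact τ2.part_mem.2 (Finset.mem_univ x)

end VnrpAux9

/-- Key property of VNRP: for every monochromatic non-crossing partition `σ` there is a
unique monochromatic non-crossing `τ` with `σ ≪ τ` and `τ` having VNRP. -/
theorem vnrp_existsUnique (m s : ℕ) (hm : 1 ≤ m) (hs : 1 ≤ s)
    (c : Fin m → Fin s) (σ : NCPart m)
    (hσ : IsNoncrossing σ) (hc : MonoChrome c σ) :
    ∃! τ : NCPart m, IsNoncrossing τ ∧ MonoChrome c τ ∧ LL σ τ ∧ VNRP c τ := by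
  refine ⟨tauVNRP c σ, ⟨tau_noncrossing hσ hc, tau_monochrome hσ hc, tau_LL hσ hc,
    tau_vnrp hσ hc⟩, ?_⟩
  rintro τ2 ⟨h1, h2, h3, h4⟩
  exact tau_eq_of_valid hσ hc h1 h2 h3 h4
end

section
/- Let c : {1,...,m} → {1,...,s} be a colouring, and consider the poset (NC(m;c), ≪). Then every maximal element of this poset has the vertical no-repeat property with respect to c. -/
open Finset

-- auxiliary lemmas

lemma VNRPaux.nested_iff {n : ℕ} {B C : Finset (Fin n)} (hB : B.Nonempty) (hC : C.Nonempty) :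
    Nested B C ↔ C.min' hC ≤ B.min' hB ∧ B.max' hB ≤ C.max' hC := by
  unfold Nested
  rw [← Finset.coe_min' hB, ← Finset.coe_min' hC, ← Finset.coe_max' hB, ← Finset.coe_max' hC]
  exact and_congr WithTop.coe_le_coe WithBot.coe_le_coe

lemma VNRPaux.cross_elim {n : ℕ} {π : NCPart n} (hπ : IsNoncrossing π)
    {B C : Finset (Fin n)} (hB : B ∈ π.parts) (hC : C ∈ π.parts) (hne : B ≠ C)
    {a b c d : Fin n} (hab : a < b) (hbc : b < c) (hcd : c < d)
    (haB : a ∈ B) (hcB : c ∈ B) (hbC : b ∈ C) (hdC : d ∈ C) : False := by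
  obtain ⟨D, hD, haD, hbD⟩ := hπ a b c d hab hbc hcd ⟨B, hB, haB, hcB⟩ ⟨C, hC, hbC, hdC⟩
  have h1 : D = B := π.eq_of_mem_parts hD hB haD haB
  have h2 : D = C := π.eq_of_mem_parts hD hC hbD hbC
  exact hne (h1 ▸ h2)


/-- Every maximal element of `(NC(m;c), ≪)` has the vertical no-repeat property. -/
theorem vnrp_of_maximal (m s : ℕ) (c : Fin m → Fin s) (σ : NCPart m)
    (hσ : IsNoncrossing σ) (hc : MonoChrome c σ)
    (hmax : ∀ ρ : NCPart m, IsNoncrossing ρ → MonoChrome c ρ → LL σ ρ → ρ = σ) :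
    VNRP c σ := by
  intro V P hV hPar i hi j hj heq
  obtain ⟨hP, ⟨hNest, hVP⟩, hnomid⟩ := hPar
  have hVne : V.Nonempty := σ.nonempty_of_mem_parts hV
  have hPne : P.Nonempty := σ.nonempty_of_mem_parts hP
  -- basic disjointness machinery
  have hdistinct : ∀ {B C : Finset (Fin m)}, B ∈ σ.parts → C ∈ σ.parts → B ≠ C →
      ∀ {x y : Fin m}, x ∈ B → y ∈ C → x ≠ y := by
    intro B C hB hC hne x y hx hy hxy
    exact hne (σ.eq_of_mem_parts hB hC hx (hxy ▸ hy))
  have hmm := (VNRPaux.nested_iff hVne hPne).mp hNest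
  -- the merged partition
  set parts' : Finset (Finset (Fin m)) :=
    insert (V ∪ P) ((σ.parts.erase V).erase P) with hparts'
  have hmem' : ∀ B : Finset (Fin m),
      B ∈ parts' ↔ B = V ∪ P ∨ (B ∈ σ.parts ∧ B ≠ V ∧ B ≠ P) := by
    intro B
    simp only [hparts', Finset.mem_insert, Finset.mem_erase]
    tauto
  have hσdisj : ∀ {B C : Finset (Fin m)}, B ∈ σ.parts → C ∈ σ.parts → B ≠ C →
      Disjoint B C := by
    intro B C hB hC hne
    rw [Finset.disjoint_left]
    intro x hx hx'
    exact hne (σ.eq_of_mem_parts hB hC hx hx')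
  have hdisjU : ∀ B ∈ σ.parts, B ≠ V → B ≠ P → Disjoint B (V ∪ P) := by
    intro B hB hBV hBP
    rw [Finset.disjoint_union_right]
    exact ⟨hσdisj hB hV hBV, hσdisj hB hP hBP⟩
  have hex : ∀ x : Fin m, ∃ B ∈ σ.parts, x ∈ B := by
    intro x
    have hx : x ∈ σ.parts.sup id := by rw [σ.sup_parts]; exact mem_univ x
    rwa [Finset.mem_sup] at hx
  have hindep : parts'.SupIndep id := by
    rw [Finset.supIndep_iff_pairwiseDisjoint]
    intro a ha b hb hab
    rcases (hmem' a).mp ha with rfl | ⟨haσ, haV, haP⟩ <;>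
      rcases (hmem' b).mp hb with h | ⟨hbσ, hbV, hbP⟩
    · exact absurd h.symm hab
    · exact (hdisjU b hbσ hbV hbP).symm
    · subst h; exact hdisjU a haσ haV haP
    · exact hσdisj haσ hbσ hab
  have hsup : parts'.sup id = (Finset.univ : Finset (Fin m)) := by
    apply Finset.eq_univ_of_forall
    intro x
    rw [Finset.mem_sup]
    obtain ⟨B, hB, hxB⟩ := hex x
    by_cases hBV : B = V
    · exact ⟨V ∪ P, Finset.mem_insert_self _ _, Finset.mem_union_left _ (hBV ▸ hxB)⟩
    by_cases hBP : B = P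
    · exact ⟨V ∪ P, Finset.mem_insert_self _ _, Finset.mem_union_right _ (hBP ▸ hxB)⟩
    · exact ⟨B, (hmem' B).mpr (Or.inr ⟨hB, hBV, hBP⟩), hxB⟩
  have hbot : ⊥ ∉ parts' := by
    intro h
    rcases (hmem' ⊥).mp h with h | ⟨hσ', -, -⟩
    · have : (V.min' hVne) ∈ (⊥ : Finset (Fin m)) := h ▸ Finset.mem_union_left _ (V.min'_mem hVne)
      exact absurd this (Finset.notMem_empty _)
    · exact σ.bot_notMem hσ'
  set ρ : NCPart m := ⟨parts', hindep, hsup, hbot⟩ with hρ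
  have hmemρ : ∀ B : Finset (Fin m),
      B ∈ ρ.parts ↔ B = V ∪ P ∨ (B ∈ σ.parts ∧ B ≠ V ∧ B ≠ P) := hmem'
  have hUPmem : V ∪ P ∈ ρ.parts := (hmemρ _).mpr (Or.inl rfl)
  have hsb : ∀ x y : Fin m, SameBlock ρ x y ↔
      SameBlock σ x y ∨ (x ∈ V ∪ P ∧ y ∈ V ∪ P) := by
    intro x y
    constructor
    · rintro ⟨B, hB, hx, hy⟩
      rcases (hmemρ B).mp hB with rfl | ⟨hBσ, -, -⟩
      · exact Or.inr ⟨hx, hy⟩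
      · exact Or.inl ⟨B, hBσ, hx, hy⟩
    · rintro (⟨B, hB, hx, hy⟩ | ⟨hx, hy⟩)
      · by_cases hBV : B = V
        · exact ⟨V ∪ P, hUPmem, Finset.mem_union_left _ (hBV ▸ hx),
            Finset.mem_union_left _ (hBV ▸ hy)⟩
        by_cases hBP : B = P
        · exact ⟨V ∪ P, hUPmem, Finset.mem_union_right _ (hBP ▸ hx),
            Finset.mem_union_right _ (hBP ▸ hy)⟩
        · exact ⟨B, (hmemρ B).mpr (Or.inr ⟨hB, hBV, hBP⟩), hx, hy⟩
      · exact ⟨V ∪ P, hUPmem, hx, hy⟩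
  -- noncrossing
  have hncρ : IsNoncrossing ρ := by
    intro i1 i2 i3 i4 h12 h23 h34 h13 h24
    rw [hsb] at h13 h24 ⊢
    rcases h13 with h13 | ⟨h1, h3⟩
    · rcases h24 with h24 | ⟨h2, h4⟩
      · exact Or.inl (hσ _ _ _ _ h12 h23 h34 h13 h24)
      · -- i1,i3 in a σ-block A; i2,i4 ∈ V ∪ P
        obtain ⟨A, hA, h1A, h3A⟩ := h13
        by_cases hAV : A = V
        · exact Or.inr ⟨Finset.mem_union_left _ (hAV ▸ h1A), h2⟩
        by_cases hAP : A = P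
        · exact Or.inr ⟨Finset.mem_union_right _ (hAP ▸ h1A), h2⟩
        rw [Finset.mem_union] at h2 h4
        rcases h2 with h2 | h2 <;> rcases h4 with h4 | h4
        · exact Or.inl (hσ _ _ _ _ h12 h23 h34 ⟨A, hA, h1A, h3A⟩ ⟨V, hV, h2, h4⟩)
        · -- i2 ∈ V, i4 ∈ P
          exfalso
          have hAne : A.Nonempty := ⟨i1, h1A⟩
          have hpmin2 : P.min' hPne ≤ i2 := le_trans hmm.1 (Finset.min'_le _ _ h2)
          have hpmin3 : P.min' hPne < i3 := lt_of_le_of_lt hpmin2 h23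
          have hpmini1 : P.min' hPne ≠ i1 := hdistinct hP hA (fun h => hAP h.symm) (P.min'_mem hPne) h1A
          rcases lt_or_gt_of_ne hpmini1 with hlt1 | hgt1
          · -- pmin < i1: compare vmin with i1
            have hvmini1 : V.min' hVne ≠ i1 :=
              hdistinct hV hA (fun h => hAV h.symm) (V.min'_mem hVne) h1A
            rcases lt_or_gt_of_ne hvmini1 with hvlt | hvgt
            · -- vmin < i1: V crosses A
              exact VNRPaux.cross_elim hσ hV hA (fun h => hAV h.symm) hvlt h12 h23
                (V.min'_mem hVne) h2 h1A h3A
            · -- i1 < vmin: A is strictly between V and P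
              have hvamax : V.max' hVne ≤ A.max' hAne := by
                by_contra h
                push_neg at h
                have h2a : i2 < A.max' hAne := lt_of_lt_of_le h23 (Finset.le_max' _ _ h3A)
                exact VNRPaux.cross_elim hσ hA hV hAV h12 h2a h h1A (A.max'_mem hAne) h2
                  (V.max'_mem hVne)
              have hpamin : P.min' hPne ≤ A.min' hAne := by
                by_contra h
                push_neg at h
                exact VNRPaux.cross_elim hσ hA hP hAP h hpmin3 h34 (A.min'_mem hAne) h3A
                  (P.min'_mem hPne) h4
              have hapmax : A.max' hAne ≤ P.max' hPne := by
                by_contra h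
                push_neg at h
                have h3p : i3 < P.max' hPne := lt_of_lt_of_le h34 (Finset.le_max' _ _ h4)
                exact VNRPaux.cross_elim hσ hP hA (fun h' => hAP h'.symm) hpmin3 h3p h
                  (P.min'_mem hPne) (P.max'_mem hPne) h3A (A.max'_mem hAne)
              have havmin : A.min' hAne ≤ V.min' hVne :=
                le_trans (Finset.min'_le _ _ h1A) (le_of_lt hvgt)
              exact hnomid ⟨A, hA,
                ⟨(VNRPaux.nested_iff hVne hAne).mpr ⟨havmin, hvamax⟩, fun h => hAV h.symm⟩,
                ⟨(VNRPaux.nested_iff hAne hPne).mpr ⟨hpamin, hapmax⟩, hAP⟩⟩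
          · -- i1 < pmin: A crosses P
            exact VNRPaux.cross_elim hσ hA hP hAP hgt1 hpmin3 h34 h1A h3A (P.min'_mem hPne) h4
        · -- i2 ∈ P, i4 ∈ V
          exfalso
          have h3p : i3 < P.max' hPne :=
            lt_of_lt_of_le h34 (le_trans (Finset.le_max' _ _ h4) hmm.2)
          exact VNRPaux.cross_elim hσ hA hP hAP h12 h23 h3p h1A h3A h2 (P.max'_mem hPne)
        · exact Or.inl (hσ _ _ _ _ h12 h23 h34 ⟨A, hA, h1A, h3A⟩ ⟨P, hP, h2, h4⟩)
    · rcases h24 with h24 | ⟨h2, h4⟩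
      · -- i1,i3 ∈ V ∪ P; i2,i4 in a σ-block B
        obtain ⟨B, hB, h2B, h4B⟩ := h24
        by_cases hBV : B = V
        · exact Or.inr ⟨h1, Finset.mem_union_left _ (hBV ▸ h2B)⟩
        by_cases hBP : B = P
        · exact Or.inr ⟨h1, Finset.mem_union_right _ (hBP ▸ h2B)⟩
        rw [Finset.mem_union] at h1 h3
        rcases h1 with h1 | h1 <;> rcases h3 with h3 | h3
        · exact Or.inl (hσ _ _ _ _ h12 h23 h34 ⟨V, hV, h1, h3⟩ ⟨B, hB, h2B, h4B⟩)
        · -- i1 ∈ V, i3 ∈ P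
          exfalso
          have hpmin2 : P.min' hPne < i2 :=
            lt_of_le_of_lt (le_trans hmm.1 (Finset.min'_le _ _ h1)) h12
          exact VNRPaux.cross_elim hσ hP hB (fun h => hBP h.symm) hpmin2 h23 h34
            (P.min'_mem hPne) h3 h2B h4B
        · -- i1 ∈ P, i3 ∈ V
          exfalso
          have hBne : B.Nonempty := ⟨i2, h2B⟩
          rcases le_or_gt i4 (V.max' hVne) with hle | hgt
          · have h4v : i4 < V.max' hVne :=
              lt_of_le_of_ne hle (hdistinct hB hV hBV h4B (V.max'_mem hVne))
            exact VNRPaux.cross_elim hσ hB hV hBV h23 h34 h4v h2B h4B h3 (V.max'_mem hVne)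
          · -- i4 > vmax : B is strictly between V and P
            have h2p : i2 < P.max' hPne :=
              lt_of_lt_of_le h23 (le_trans (Finset.le_max' _ _ h3) hmm.2)
            have hbvmin : B.min' hBne ≤ V.min' hVne := by
              by_contra h
              push_neg at h
              have hb3 : B.min' hBne < i3 := lt_of_le_of_lt (Finset.min'_le _ _ h2B) h23
              exact VNRPaux.cross_elim hσ hV hB (fun h' => hBV h'.symm) h hb3 h34
                (V.min'_mem hVne) h3 (B.min'_mem hBne) h4B
            have hbpmax : B.max' hBne ≤ P.max' hPne := by
              by_contra h
              push_neg at h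
              exact VNRPaux.cross_elim hσ hP hB (fun h' => hBP h'.symm) h12 h2p h h1
                (P.max'_mem hPne) h2B (B.max'_mem hBne)
            have hpbmin : P.min' hPne ≤ B.min' hBne := by
              by_contra h
              push_neg at h
              have hp2 : P.min' hPne < i2 := lt_of_le_of_lt (Finset.min'_le _ _ h1) h12
              exact VNRPaux.cross_elim hσ hB hP hBP h hp2 h2p (B.min'_mem hBne) h2B
                (P.min'_mem hPne) (P.max'_mem hPne)
            have hvbmax : V.max' hVne ≤ B.max' hBne :=
              le_trans (le_of_lt hgt) (Finset.le_max' _ _ h4B)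
            exact hnomid ⟨B, hB,
              ⟨(VNRPaux.nested_iff hVne hBne).mpr ⟨hbvmin, hvbmax⟩, fun h => hBV h.symm⟩,
              ⟨(VNRPaux.nested_iff hBne hPne).mpr ⟨hpbmin, hbpmax⟩, hBP⟩⟩
        · exact Or.inl (hσ _ _ _ _ h12 h23 h34 ⟨P, hP, h1, h3⟩ ⟨B, hB, h2B, h4B⟩)
      · exact Or.inr ⟨h1, h2⟩
  -- monochrome
  have hmono : MonoChrome c ρ := by
    intro B hB x hx y hy
    rcases (hmemρ B).mp hB with rfl | ⟨hBσ, -, -⟩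
    · have key : ∀ z ∈ V ∪ P, c z = c i := by
        intro z hz
        rcases Finset.mem_union.mp hz with hz | hz
        · exact hc V hV z hz i hi
        · exact (hc P hP z hz j hj).trans heq.symm
      rw [key x hx, key y hy]
    · exact hc B hBσ x hx y hy
  -- LL σ ρ
  have hLL : LL σ ρ := by
    constructor
    · intro B hB
      by_cases hBV : B = V
      · exact ⟨V ∪ P, hUPmem, hBV ▸ Finset.subset_union_left⟩
      by_cases hBP : B = P
      · exact ⟨V ∪ P, hUPmem, hBP ▸ Finset.subset_union_right⟩
      · exact ⟨B, (hmemρ B).mpr (Or.inr ⟨hB, hBV, hBP⟩), Finset.Subset.refl B⟩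
    · intro W hW
      rcases (hmemρ W).mp hW with rfl | ⟨hWσ, -, -⟩
      · have hUPne : (V ∪ P).Nonempty := ⟨j, Finset.mem_union_right _ hj⟩
        have hminU : (V ∪ P).min' hUPne = P.min' hPne := by
          apply le_antisymm
          · exact Finset.min'_le _ _ (Finset.mem_union_right _ (P.min'_mem hPne))
          · apply Finset.le_min'
            intro y hy
            rcases Finset.mem_union.mp hy with hy | hy
            · exact le_trans hmm.1 (Finset.min'_le _ _ hy)
            · exact Finset.min'_le _ _ hy
        have hmaxU : (V ∪ P).max' hUPne = P.max' hPne := by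
          apply le_antisymm
          · apply Finset.max'_le
            intro y hy
            rcases Finset.mem_union.mp hy with hy | hy
            · exact le_trans (Finset.le_max' _ _ hy) hmm.2
            · exact Finset.le_max' _ _ hy
          · exact Finset.le_max' _ _ (Finset.mem_union_right _ (P.max'_mem hPne))
        refine ⟨P, hP, Finset.subset_union_right, ?_, ?_⟩
        · rw [← Finset.coe_min' hPne, ← Finset.coe_min' hUPne, hminU]
        · rw [← Finset.coe_max' hPne, ← Finset.coe_max' hUPne, hmaxU]
      · exact ⟨W, hWσ, Finset.Subset.refl W, rfl, rfl⟩
  -- contradiction with maximality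
  have hρσ : ρ = σ := hmax ρ hncρ hmono hLL
  have hUPσ : V ∪ P ∈ σ.parts := hρσ ▸ hUPmem
  have hVPeq : V ∪ P = P :=
    σ.eq_of_mem_parts hUPσ hP (Finset.mem_union_right _ hj) hj
  have hiP : i ∈ P := hVPeq ▸ Finset.mem_union_left P hi
  exact hVP (σ.eq_of_mem_parts hV hP hi hiP)
end

section
/- Conversely, every partition in NC(m;c) having the vertical no-repeat property with respect to c is a maximal element of the poset (NC(m;c), ≪). -/
open Finset

/-!
Let `σ ≪ ρ` with `ρ` non-crossing and monochromatic, and let `W` be a block of `ρ`. It contains a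
block `V` of `σ` with the same endpoints. If `V ≠ W`, take the block `U ⊆ W`, `U ≠ V`, of `σ` whose
minimum is smallest. Any block of `σ` nested between `U` and `V` must lie in `W` (otherwise its
block in `ρ` would cross `W`), and then its minimum would be smaller than that of `U`; so `V` is the
parent of `U`. By the vertical no-repeat property `U` and `V` have different colours, although both
lie in the monochromatic block `W`. Hence every block of `ρ` is a block of `σ`, i.e. `ρ = σ`.
-/

theorem Finpartition.eq_of_min_eq {α : Type*} [LinearOrder α] {s : Finset α} (P : Finpartition s)
    {X Y : Finset α} (hX : X ∈ P.parts) (hY : Y ∈ P.parts) (h : X.min = Y.min) : X = Y := by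
  obtain ⟨a, ha⟩ := min_of_nonempty (P.nonempty_of_mem_parts hX)
  exact P.eq_of_mem_parts hX hY (mem_of_min ha) (mem_of_min (h ▸ ha))

theorem Finpartition.eq_of_parts_subset {α : Type*} [DecidableEq α] {s : Finset α}
    {P Q : Finpartition s} (h : P.parts ⊆ Q.parts) : P = Q := by
  ext B
  refine ⟨fun hB => h hB, fun hB => ?_⟩
  obtain ⟨x, hx⟩ := Q.nonempty_of_mem_parts hB
  obtain ⟨C, hC, hxC⟩ := P.exists_mem (Q.le hB hx)
  rwa [Q.eq_of_mem_parts hB (h hC) hx hxC]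

section

variable {n : ℕ} {σ ρ : NCPart n} {X W : Finset (Fin n)}

theorem Refines.subset_of_mem (h : Refines σ ρ) (hX : X ∈ σ.parts) (hW : W ∈ ρ.parts)
    {x : Fin n} (hxX : x ∈ X) (hxW : x ∈ W) : X ⊆ W := by
  obtain ⟨C, hC, hXC⟩ := h X hX
  rwa [ρ.eq_of_mem_parts hC hW (hXC hxX) hxW] at hXC

theorem Refines.subset_of_noncrossing (h : Refines σ ρ) (hρ : IsNoncrossing ρ)
    (hX : X ∈ σ.parts) (hW : W ∈ ρ.parts) {x : Fin n} (hx : x ∈ W) (hWX : W.min ≤ X.min)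
    (hXx : X.min ≤ x) (hxX : (x : WithBot (Fin n)) ≤ X.max) : X ⊆ W := by
  obtain ⟨p, hp⟩ := min_of_nonempty (ρ.nonempty_of_mem_parts hW)
  obtain ⟨a, ha⟩ := min_of_nonempty (σ.nonempty_of_mem_parts hX)
  obtain ⟨b, hb⟩ := max_of_nonempty (σ.nonempty_of_mem_parts hX)
  have hpW := mem_of_min hp
  have haX := mem_of_min ha
  have hbX := mem_of_max hb
  by_contra hXW
  have haW : a ∉ W := fun haW => hXW (h.subset_of_mem hX hW haX haW)
  have hbW : b ∉ W := fun hbW => hXW (h.subset_of_mem hX hW hbX hbW)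
  rw [hp, ha, WithTop.coe_le_coe] at hWX
  rw [ha, WithTop.coe_le_coe] at hXx
  rw [hb, WithBot.coe_le_coe] at hxX
  obtain ⟨C, hC, hXC⟩ := h X hX
  obtain ⟨B, hB, hpB, haB⟩ := hρ p a x b
    (hWX.lt_of_ne (by rintro rfl; exact haW hpW)) (hXx.lt_of_ne (by rintro rfl; exact haW hx))
    (hxX.lt_of_ne (by rintro rfl; exact hbW hx)) ⟨W, hW, hpW, hx⟩ ⟨C, hC, hXC haX, hXC hbX⟩
  exact haW (ρ.eq_of_mem_parts hB hW hpB hpW ▸ haB)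

theorem exists_isParent_of_ssubset (h : Refines σ ρ) (hρ : IsNoncrossing ρ) {V : Finset (Fin n)}
    (hV : V ∈ σ.parts) (hW : W ∈ ρ.parts) (hVW : V ⊂ W) (hmin : V.min = W.min)
    (hmax : V.max = W.max) : ∃ U ∈ σ.parts, U ⊆ W ∧ IsParent σ U V := by
  set S := σ.parts.filter fun U => U ⊆ W ∧ U ≠ V
  have hS : S.Nonempty := by
    obtain ⟨u, huW, huV⟩ := exists_of_ssubset hVW
    obtain ⟨U, hU, huU⟩ := σ.exists_mem (mem_univ u)
    exact ⟨U, mem_filter.2 ⟨hU, h.subset_of_mem hU hW huU huW, by rintro rfl; exact huV huU⟩⟩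
  obtain ⟨U, hUS, hUmin⟩ := S.exists_min_image Finset.min hS
  obtain ⟨hU, hUW, hUV⟩ := mem_filter.1 hUS
  refine ⟨U, hU, hUW, hV, ⟨⟨hmin ▸ min_mono hUW, hmax ▸ max_mono hUW⟩, hUV⟩, ?_⟩
  rintro ⟨V', hV', ⟨⟨hV'U, hUV'⟩, hUV'ne⟩, ⟨hVV', -⟩, hV'V⟩
  obtain ⟨x, hx⟩ := min_of_nonempty (σ.nonempty_of_mem_parts hU)
  have hV'W : V' ⊆ W := h.subset_of_noncrossing hρ hV' hW (hUW (mem_of_min hx)) (hmin ▸ hVV')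
    (hx ▸ hV'U) ((le_max (mem_of_min hx)).trans hUV')
  have hUV'min := hUmin V' (mem_filter.2 ⟨hV', hV'W, hV'V⟩)
  exact hUV'ne (σ.eq_of_min_eq hU hV' (hUV'min.antisymm hV'U))

theorem LL.parts_subset_of_vnrp {s : ℕ} {c : Fin n → Fin s} (hv : VNRP c σ)
    (hρ : IsNoncrossing ρ) (hcρ : MonoChrome c ρ) (h : LL σ ρ) : ρ.parts ⊆ σ.parts := by
  intro W hW
  obtain ⟨V, hV, hVW, hmin, hmax⟩ := h.2 W hW
  obtain rfl | hVW := hVW.eq_or_ssubset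
  · exact hV
  obtain ⟨U, hU, hUW, hUV⟩ := exists_isParent_of_ssubset h.1 hρ hV hW hVW hmin hmax
  obtain ⟨u, hu⟩ := σ.nonempty_of_mem_parts hU
  obtain ⟨v, hvV⟩ := σ.nonempty_of_mem_parts hV
  exact absurd (hcρ W hW u (hUW hu) v (hVW.subset hvV)) (hv U V hU hUV u hu v hvV)

end

theorem maximal_of_vnrp_general (m s : ℕ) (c : Fin m → Fin s) (σ : NCPart m) (hv : VNRP c σ) :
    ∀ ρ : NCPart m, IsNoncrossing ρ → MonoChrome c ρ → LL σ ρ → ρ = σ :=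
  fun _ hρ hcρ h => Finpartition.eq_of_parts_subset (h.parts_subset_of_vnrp hv hρ hcρ)

/-- Every element of `NC(m;c)` with the vertical no-repeat property is maximal in
`(NC(m;c), ≪)`. -/
theorem maximal_of_vnrp (m s : ℕ) (c : Fin m → Fin s) (σ : NCPart m)
    (hσ : IsNoncrossing σ) (hc : MonoChrome c σ) (hv : VNRP c σ) :
    ∀ ρ : NCPart m, IsNoncrossing ρ → MonoChrome c ρ → LL σ ρ → ρ = σ :=
  maximal_of_vnrp_general m s c σ hv
end

section
/- Let n ≥ 1 and π ∈ NC(2n). Then π is anticommutator-friendly (i.e., OuterMax(π) ⊆ {1,3,...,2n-1} ∪ {2n} and for every odd j ∉ OuterMax(π), depth_π(j) ≠ depth_π(j+1)) if and only if OuterMax(π) ⊆ {1,3,...,2n-1} ∪ {2n} and calt_π(2i-1) ≠ calt_π(2i) for all 1 ≤ i ≤ n, where calt_π is the canonical alternating colouring of π. -/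
open Finset

namespace ACAux

variable {N : ℕ}

lemma blk_ne {π : NCPart N} {B : Finset (Fin N)} (hB : B ∈ π.parts) : B.Nonempty :=
  π.nonempty_of_mem_parts hB

lemma nested_iff {π : NCPart N} {B W : Finset (Fin N)} (hB : B ∈ π.parts) (hW : W ∈ π.parts) :
    Nested B W ↔ W.min' (blk_ne hW) ≤ B.min' (blk_ne hB) ∧
      B.max' (blk_ne hB) ≤ W.max' (blk_ne hW) := by
  unfold Nested
  rw [← Finset.coe_min' (blk_ne hB), ← Finset.coe_min' (blk_ne hW),
    ← Finset.coe_max' (blk_ne hB), ← Finset.coe_max' (blk_ne hW)]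
  exact and_congr WithTop.coe_le_coe WithBot.coe_le_coe

lemma sn_iff {π : NCPart N} {B W : Finset (Fin N)} (hB : B ∈ π.parts) (hW : W ∈ π.parts) :
    StrictNested B W ↔ W.min' (blk_ne hW) < B.min' (blk_ne hB) ∧
      B.max' (blk_ne hB) < W.max' (blk_ne hW) := by
  constructor
  · rintro ⟨hne, hBW⟩
    rw [nested_iff hB hW] at hne
    refine ⟨lt_of_le_of_ne hne.1 ?_, lt_of_le_of_ne hne.2 ?_⟩
    · intro h
      refine hBW (π.eq_of_mem_parts hB hW ?_ (Finset.min'_mem W (blk_ne hW)))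
      rw [h]; exact Finset.min'_mem B (blk_ne hB)
    · intro h
      refine hBW (π.eq_of_mem_parts hB hW (Finset.max'_mem B (blk_ne hB)) ?_)
      rw [h]; exact Finset.max'_mem W (blk_ne hW)
  · rintro ⟨h1, h2⟩
    refine ⟨(nested_iff hB hW).mpr ⟨le_of_lt h1, le_of_lt h2⟩, ?_⟩
    rintro rfl
    exact absurd h1 (lt_irrefl _)

lemma cross {π : NCPart N} (hπ : IsNoncrossing π) {B B' : Finset (Fin N)}
    (hB : B ∈ π.parts) (hB' : B' ∈ π.parts) {i1 i2 i3 i4 : Fin N}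
    (h12 : i1 < i2) (h23 : i2 < i3) (h34 : i3 < i4)
    (m1 : i1 ∈ B) (m3 : i3 ∈ B) (m2 : i2 ∈ B') (m4 : i4 ∈ B') : B = B' := by
  obtain ⟨C, hC, h1C, h2C⟩ := hπ i1 i2 i3 i4 h12 h23 h34 ⟨B, hB, m1, m3⟩ ⟨B', hB', m2, m4⟩
  rw [π.eq_of_mem_parts hB hC m1 h1C, π.eq_of_mem_parts hB' hC m2 h2C]

lemma span_sub {π : NCPart N} (hπ : IsNoncrossing π) {B W : Finset (Fin N)}
    (hB : B ∈ π.parts) (hW : W ∈ π.parts)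
    (h1 : W.min' (blk_ne hW) ≤ B.min' (blk_ne hB))
    (h2 : B.min' (blk_ne hB) ≤ W.max' (blk_ne hW)) :
    B.max' (blk_ne hB) ≤ W.max' (blk_ne hW) := by
  by_contra h
  push_neg at h
  rcases eq_or_lt_of_le h1 with heq | hlt
  · have hBW : B = W := π.eq_of_mem_parts hB hW (heq ▸ Finset.min'_mem B _)
      (heq ▸ Finset.min'_mem W _)
    subst hBW; exact absurd rfl (ne_of_gt h)
  · have h2' : B.min' (blk_ne hB) < W.max' (blk_ne hW) := by
      rcases eq_or_lt_of_le h2 with heq | hlt'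
      · exact absurd (π.eq_of_mem_parts hB hW (Finset.min'_mem B _)
          (heq ▸ Finset.max'_mem W _)) (fun hE => by subst hE; exact absurd rfl (ne_of_gt h))
      · exact hlt'
    have := cross hπ hW hB hlt h2' h (Finset.min'_mem W _) (Finset.max'_mem W _)
      (Finset.min'_mem B _) (Finset.max'_mem B _)
    subst this
    exact absurd rfl (ne_of_gt h)

lemma laminar {π : NCPart N} (hπ : IsNoncrossing π) {B W : Finset (Fin N)}
    (hB : B ∈ π.parts) (hW : W ∈ π.parts) {x : Fin N}
    (h1 : B.min' (blk_ne hB) ≤ x) (h2 : x ≤ B.max' (blk_ne hB))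
    (h3 : W.min' (blk_ne hW) ≤ x) (h4 : x ≤ W.max' (blk_ne hW)) :
    (B.min' (blk_ne hB) ≤ W.min' (blk_ne hW) ∧ W.max' (blk_ne hW) ≤ B.max' (blk_ne hB)) ∨
    (W.min' (blk_ne hW) ≤ B.min' (blk_ne hB) ∧ B.max' (blk_ne hB) ≤ W.max' (blk_ne hW)) := by
  rcases le_total (B.min' (blk_ne hB)) (W.min' (blk_ne hW)) with h | h
  · exact Or.inl ⟨h, span_sub hπ hW hB h (le_trans h3 h2)⟩
  · exact Or.inr ⟨h, span_sub hπ hB hW h (le_trans h1 h4)⟩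

def Dset (π : NCPart N) (j : Fin N) : Set (Finset (Fin N)) :=
  {W | W ∈ π.parts ∧ StrictNested (π.part j) W}

lemma blockDepth_eq (π : NCPart N) (j : Fin N) : blockDepth π j = (Dset π j).ncard := by
  unfold blockDepth Dset
  congr 1
  ext W
  simp only [Set.mem_setOf_eq]
  constructor
  · rintro ⟨hW, B, hB, hjB, hsn⟩
    exact ⟨hW, by
      rwa [π.eq_of_mem_parts (π.part_mem.mpr (mem_univ j)) hB (π.mem_part (mem_univ j)) hjB]⟩
  · rintro ⟨hW, hsn⟩
    exact ⟨hW, π.part j, π.part_mem.mpr (mem_univ j), π.mem_part (mem_univ j), hsn⟩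

lemma Dset_finite (π : NCPart N) (j : Fin N) : (Dset π j).Finite :=
  Set.Finite.subset π.parts.finite_toSet fun _ hW => hW.1

lemma fin2 : ∀ a b c : Fin 2, a ≠ c → b ≠ c → a = b := by decide

lemma exists_parent {π : NCPart N} (hπ : IsNoncrossing π) (j : Fin N)
    (hne : (Dset π j).Nonempty) :
    ∃ P, P ∈ Dset π j ∧ (∀ W ∈ Dset π j, Nested P W) ∧ IsParent π (π.part j) P := by
  classical
  set s := (Dset_finite π j).toFinset with hs
  have hsne : s.Nonempty := by
    obtain ⟨P, hP⟩ := hne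
    exact ⟨P, (Set.Finite.mem_toFinset _).mpr hP⟩
  obtain ⟨P, hPs, hPmax⟩ := Finset.exists_max_image s (fun W => W.min) hsne
  have hPD : P ∈ Dset π j := (Set.Finite.mem_toFinset _).mp hPs
  have hBj : π.part j ∈ π.parts := π.part_mem.mpr (mem_univ j)
  have hjBj : j ∈ π.part j := π.mem_part (mem_univ j)
  have hP : P ∈ π.parts := hPD.1
  -- every W in Dset nests P
  have hnest : ∀ W ∈ Dset π j, Nested P W := by
    intro W hWD
    have hW : W ∈ π.parts := hWD.1
    have hmin : W.min ≤ P.min := hPmax W ((Set.Finite.mem_toFinset _).mpr hWD)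
    have hmin' : W.min' (blk_ne hW) ≤ P.min' (blk_ne hP) := by
      rw [← WithTop.coe_le_coe, Finset.coe_min', Finset.coe_min']
      exact hmin
    obtain ⟨p1, p2⟩ := (sn_iff hBj hP).mp hPD.2
    obtain ⟨w1, w2⟩ := (sn_iff hBj hW).mp hWD.2
    have h2 : P.min' (blk_ne hP) ≤ W.max' (blk_ne hW) :=
      le_trans (le_of_lt p1) (le_trans (Finset.min'_le _ j hjBj)
        (le_trans (Finset.le_max' _ j hjBj) (le_of_lt w2)))
    exact (nested_iff hP hW).mpr ⟨hmin', span_sub hπ hP hW hmin' h2⟩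
  refine ⟨P, hPD, hnest, hP, hPD.2, ?_⟩
  rintro ⟨V, hV, hsn1, hsn2⟩
  have hVD : V ∈ Dset π j := ⟨hV, hsn1⟩
  obtain ⟨n1, _⟩ := (nested_iff hP hV).mp (hnest V hVD)
  obtain ⟨n2, _⟩ := (sn_iff hV hP).mp hsn2
  exact absurd (lt_of_le_of_lt n1 n2) (lt_irrefl _)

end ACAux

namespace ACAux

lemma key {N : ℕ} {π : NCPart N} (hπ : IsNoncrossing π) (calt : Fin N → Fin 2)
    (hconst : ∀ B ∈ π.parts, ∀ i ∈ B, ∀ j ∈ B, calt i = calt j)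
    (hc2 : ∀ j j' : Fin N, IsOuterMax π j → IsOuterMin π j' → (j' : ℕ) = (j : ℕ) + 1 →
      calt j ≠ calt j')
    (hc3 : ∀ V P : Finset (Fin N), V ∈ π.parts → IsParent π V P →
      ∀ i ∈ V, ∀ k ∈ P, calt i ≠ calt k)
    (j j' : Fin N) (hjj : (j' : ℕ) = (j : ℕ) + 1) :
    ((¬ IsOuterMax π j → blockDepth π j ≠ blockDepth π j') ↔ calt j ≠ calt j') := by
  classical
  set B := π.part j with hBdef
  set B' := π.part j' with hB'def
  have hB : B ∈ π.parts := π.part_mem.mpr (mem_univ j)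
  have hB' : B' ∈ π.parts := π.part_mem.mpr (mem_univ j')
  have hjB : j ∈ B := π.mem_part (mem_univ j)
  have hj'B' : j' ∈ B' := π.mem_part (mem_univ j')
  have hlt : j < j' := by rw [Fin.lt_def]; omega
  have hDj : ∀ W, W ∈ Dset π j ↔ (W ∈ π.parts ∧ StrictNested B W) := fun W => Iff.rfl
  have hDj' : ∀ W, W ∈ Dset π j' ↔ (W ∈ π.parts ∧ StrictNested B' W) := fun W => Iff.rfl
  have haj : B.min' (blk_ne hB) ≤ j := Finset.min'_le B j hjB
  have hjb : j ≤ B.max' (blk_ne hB) := Finset.le_max' B j hjB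
  have ha'j' : B'.min' (blk_ne hB') ≤ j' := Finset.min'_le B' j' hj'B'
  have hj'b' : j' ≤ B'.max' (blk_ne hB') := Finset.le_max' B' j' hj'B'
  have hWeq : ∀ {C C' : Finset (Fin N)}, C ∈ π.parts → C' ∈ π.parts →
      ∀ {x : Fin N}, x ∈ C → x ∈ C' → C = C' :=
    @fun C C' hC hC' x hx hx' => π.eq_of_mem_parts hC hC' hx hx'
  by_cases hBB' : B = B'
  · -- same block
    have hceq : calt j = calt j' := hconst B hB j hjB j' (by rw [hBB']; exact hj'B')
    have hnout : ¬ IsOuterMax π j := by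
      rintro ⟨C, ⟨hC, _⟩, hjC, hmaxC⟩
      have hCB : C = B := hWeq hC hB hjC hjB
      have := hmaxC j' (by rw [hCB, hBB']; exact hj'B')
      exact absurd hlt (not_lt.mpr this)
    have hdep : blockDepth π j = blockDepth π j' := by
      rw [blockDepth_eq, blockDepth_eq]
      unfold Dset
      rw [show π.part j = π.part j' from hBB']
    constructor
    · intro h; exact absurd hdep (h hnout)
    · intro h; exact absurd hceq h
  · by_cases hdisj : B.max' (blk_ne hB) < B'.min' (blk_ne hB')
    · -- disjoint spans
      have hbv : (B.max' (blk_ne hB) : ℕ) = (j : ℕ) := by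
        have h1 := Fin.le_def.mp hjb
        have h2 := Fin.le_def.mp ha'j'
        have h3 := Fin.lt_def.mp hdisj
        omega
      have hbj : B.max' (blk_ne hB) = j := Fin.ext hbv
      have ha'v : (B'.min' (blk_ne hB') : ℕ) = (j' : ℕ) := by
        have h1 := Fin.le_def.mp hjb
        have h2 := Fin.le_def.mp ha'j'
        have h3 := Fin.lt_def.mp hdisj
        omega
      have ha'j'' : B'.min' (blk_ne hB') = j' := Fin.ext ha'v
      have hDeq : Dset π j = Dset π j' := by
        ext W
        rw [hDj W, hDj' W]
        constructor
        · rintro ⟨hW, hsn⟩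
          obtain ⟨s1, s2⟩ := (sn_iff hB hW).mp hsn
          refine ⟨hW, ?_⟩
          have hw1 : W.min' (blk_ne hW) ≤ j' := by
            rw [Fin.le_def]
            have := Fin.lt_def.mp s1
            have := Fin.le_def.mp haj
            omega
          have hw2 : j' ≤ W.max' (blk_ne hW) := by
            rw [Fin.le_def]
            have := Fin.lt_def.mp s2
            omega
          rcases laminar hπ hW hB' hw1 hw2 ha'j' hj'b' with ⟨l1, l2⟩ | ⟨l1, l2⟩
          · refine ⟨(nested_iff hB' hW).mpr ⟨l1, l2⟩, ?_⟩
            rintro rfl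
            have := Fin.lt_def.mp s1
            have := Fin.le_def.mp haj
            omega
          · exfalso
            have := Fin.le_def.mp l1
            have := Fin.lt_def.mp s1
            have := Fin.le_def.mp haj
            omega
        · rintro ⟨hW, hsn⟩
          obtain ⟨s1, s2⟩ := (sn_iff hB' hW).mp hsn
          refine ⟨hW, ?_⟩
          have hw1 : W.min' (blk_ne hW) ≤ j := by
            rw [Fin.le_def]
            have := Fin.lt_def.mp s1
            omega
          have hw2 : j ≤ W.max' (blk_ne hW) := by
            rw [Fin.le_def]
            have := Fin.lt_def.mp s2
            have := Fin.le_def.mp hj'b'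
            omega
          rcases laminar hπ hW hB hw1 hw2 haj hjb with ⟨l1, l2⟩ | ⟨l1, l2⟩
          · refine ⟨(nested_iff hB hW).mpr ⟨l1, l2⟩, ?_⟩
            rintro rfl
            have := Fin.lt_def.mp s2
            have := Fin.le_def.mp hj'b'
            omega
          · exfalso
            have := Fin.le_def.mp l2
            have := Fin.lt_def.mp s2
            have := Fin.le_def.mp hj'b'
            omega
      have hdep : blockDepth π j = blockDepth π j' := by
        rw [blockDepth_eq, blockDepth_eq, hDeq]
      rcases Set.eq_empty_or_nonempty (Dset π j) with hD0 | hDne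
      · have houtB : IsOuter π B := by
          refine ⟨hB, fun V hV hnest => ?_⟩
          by_contra hne
          have : V ∈ Dset π j := (hDj V).mpr ⟨hV, hnest, fun h => hne h.symm⟩
          rw [hD0] at this; exact this
        have houtmax : IsOuterMax π j :=
          ⟨B, houtB, hjB, fun i hi => hbj ▸ Finset.le_max' B i hi⟩
        have houtB' : IsOuter π B' := by
          refine ⟨hB', fun V hV hnest => ?_⟩
          by_contra hne
          have : V ∈ Dset π j' := (hDj' V).mpr ⟨hV, hnest, fun h => hne h.symm⟩
          rw [← hDeq, hD0] at this; exact this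
        have houtmin : IsOuterMin π j' :=
          ⟨B', houtB', hj'B', fun i hi => ha'j'' ▸ Finset.min'_le B' i hi⟩
        exact iff_of_true (fun hno => absurd houtmax hno) (hc2 j j' houtmax houtmin hjj)
      · obtain ⟨P, hPD, hPmin, hPpar⟩ := exists_parent hπ j hDne
        obtain ⟨P', hP'D, hP'min, hP'par⟩ := exists_parent hπ j' (by rw [← hDeq]; exact hDne)
        have hPp : P ∈ π.parts := hPD.1
        have hP'p : P' ∈ π.parts := hP'D.1
        have hPP' : P = P' := by
          have n1 := hPmin P' (by rw [hDeq]; exact hP'D)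
          have n2 := hP'min P (by rw [← hDeq]; exact hPD)
          obtain ⟨m1, _⟩ := (nested_iff hPp hP'p).mp n1
          obtain ⟨m2, _⟩ := (nested_iff hP'p hPp).mp n2
          have hmm : P.min' (blk_ne hPp) = P'.min' (blk_ne hP'p) := le_antisymm m2 m1
          exact hWeq hPp hP'p (Finset.min'_mem P (blk_ne hPp))
            (by rw [hmm]; exact Finset.min'_mem P' (blk_ne hP'p))
        subst hPP'
        have h1 : calt j ≠ calt (P.min' (blk_ne hPp)) :=
          hc3 B P hB hPpar j hjB _ (Finset.min'_mem P (blk_ne hPp))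
        have h2 : calt j' ≠ calt (P.min' (blk_ne hPp)) :=
          hc3 B' P hB' hP'par j' hj'B' _ (Finset.min'_mem P (blk_ne hPp))
        have hceq : calt j = calt j' := fin2 _ _ _ h1 h2
        have hnout : ¬ IsOuterMax π j := by
          rintro ⟨C, ⟨hC, hCout⟩, hjC, _⟩
          have hCB : C = B := hWeq hC hB hjC hjB
          subst hCB
          exact hPD.2.2 (hCout P hPp hPD.2.1).symm
        constructor
        · intro h; exact absurd hdep (h hnout)
        · intro h; exact absurd hceq h
    · push_neg at hdisj
      rcases le_total (B.min' (blk_ne hB)) (B'.min' (blk_ne hB')) with hm | hm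
      · -- case I : B' strictly inside B, j+1 = min B'
        have hMx : B'.max' (blk_ne hB') ≤ B.max' (blk_ne hB) := span_sub hπ hB' hB hm hdisj
        have ha'v : B'.min' (blk_ne hB') = j' := by
          by_contra hne2
          have hne3 : (B'.min' (blk_ne hB') : ℕ) ≠ (j' : ℕ) := fun h => hne2 (Fin.ext h)
          have hx1 : (B'.min' (blk_ne hB') : ℕ) ≠ (j : ℕ) := by
            intro hx
            have hxx : B'.min' (blk_ne hB') = j := Fin.ext hx
            exact hBB' (hWeq hB hB' hjB (hxx ▸ Finset.min'_mem B' (blk_ne hB')))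
          have h12 : B'.min' (blk_ne hB') < j := by
            rw [Fin.lt_def]
            have := Fin.le_def.mp ha'j'
            omega
          have h34 : j' < B.max' (blk_ne hB) := by
            have hle : j' ≤ B.max' (blk_ne hB) := le_trans hj'b' hMx
            rcases eq_or_lt_of_le hle with heq | h
            · exact absurd (hWeq hB hB' (by rw [heq]; exact Finset.max'_mem B (blk_ne hB)) hj'B')
                hBB'
            · exact h
          exact hBB' (cross hπ hB' hB h12 hlt h34 (Finset.min'_mem B' (blk_ne hB')) hj'B' hjB
            (Finset.max'_mem B (blk_ne hB))).symm
        have hsnB'B : StrictNested B' B :=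
          ⟨(nested_iff hB' hB).mpr ⟨hm, hMx⟩, fun h => hBB' h.symm⟩
        have hins : Dset π j' = insert B (Dset π j) := by
          ext W
          rw [hDj' W]
          simp only [Set.mem_insert_iff]
          constructor
          · rintro ⟨hW, hsn⟩
            by_cases hWB : W = B
            · exact Or.inl hWB
            · right
              rw [hDj W]
              obtain ⟨s1, s2⟩ := (sn_iff hB' hW).mp hsn
              refine ⟨hW, ?_⟩
              have hw1 : W.min' (blk_ne hW) ≤ j := by
                rw [Fin.le_def]
                have := Fin.lt_def.mp s1
                have := congrArg Fin.val ha'v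
                simp only [Fin.val_fin_lt] at *
                omega
              have hw2 : j ≤ W.max' (blk_ne hW) := by
                rw [Fin.le_def]
                have := Fin.lt_def.mp s2
                have := Fin.le_def.mp hj'b'
                omega
              rcases laminar hπ hW hB hw1 hw2 haj hjb with ⟨l1, l2⟩ | ⟨l1, l2⟩
              · exact ⟨(nested_iff hB hW).mpr ⟨l1, l2⟩, fun h => hWB h.symm⟩
              · exfalso
                have c1 : W.min' (blk_ne hW) < j := by
                  rcases eq_or_lt_of_le hw1 with heq | h
                  · exact absurd (hWeq hW hB (heq ▸ Finset.min'_mem W (blk_ne hW)) hjB) hWB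
                  · exact h
                have c2 : j < W.max' (blk_ne hW) := by
                  rw [Fin.lt_def]
                  have := Fin.lt_def.mp s2
                  have := Fin.le_def.mp hj'b'
                  omega
                have c3 : W.max' (blk_ne hW) < B.max' (blk_ne hB) := by
                  rcases eq_or_lt_of_le l2 with heq | h
                  · exact absurd (hWeq hW hB (Finset.max'_mem W (blk_ne hW))
                      (by rw [heq]; exact Finset.max'_mem B (blk_ne hB))) hWB
                  · exact h
                exact hWB (cross hπ hW hB c1 c2 c3 (Finset.min'_mem W (blk_ne hW))
                  (Finset.max'_mem W (blk_ne hW)) hjB (Finset.max'_mem B (blk_ne hB)))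
          · rintro (rfl | hWD)
            · exact ⟨hB, hsnB'B⟩
            · obtain ⟨hW, hsn⟩ := (hDj W).mp hWD
              obtain ⟨s1, s2⟩ := (sn_iff hB hW).mp hsn
              exact ⟨hW, (sn_iff hB' hW).mpr ⟨lt_of_lt_of_le s1 hm, lt_of_le_of_lt hMx s2⟩⟩
        have hBnotD : B ∉ Dset π j := fun hx => hx.2.2 rfl
        have hdep : blockDepth π j' = blockDepth π j + 1 := by
          rw [blockDepth_eq, blockDepth_eq, hins,
            Set.ncard_insert_of_notMem hBnotD (Dset_finite π j)]
        have hpar : IsParent π B' B := by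
          refine ⟨hB, hsnB'B, ?_⟩
          rintro ⟨V, hV, hsn1, hsn2⟩
          have hVD : V ∈ Dset π j' := (hDj' V).mpr ⟨hV, hsn1⟩
          rw [hins, Set.mem_insert_iff] at hVD
          rcases hVD with rfl | hVD
          · exact hsn2.2 rfl
          · obtain ⟨t1, _⟩ := (sn_iff hB hV).mp ((hDj V).mp hVD).2
            obtain ⟨t2, _⟩ := (sn_iff hV hB).mp hsn2
            exact absurd (lt_trans t1 t2) (lt_irrefl _)
        have hcol : calt j' ≠ calt j := hc3 B' B hB' hpar j' hj'B' j hjB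
        constructor
        · intro _ h; exact hcol h.symm
        · intro _ _
          omega
      · -- case II : B strictly inside B', j = max B
        have hMx : B.max' (blk_ne hB) ≤ B'.max' (blk_ne hB') :=
          span_sub hπ hB hB' hm (le_trans haj (le_trans (le_of_lt hlt) hj'b'))
        have hbv : B.max' (blk_ne hB) = j := by
          by_contra hne2
          have hmlt : B'.min' (blk_ne hB') < j := by
            rcases eq_or_lt_of_le (le_trans hm haj) with heq | h
            · exact absurd (hWeq hB hB' hjB (heq ▸ Finset.min'_mem B' (blk_ne hB'))) hBB'
            · exact h
          have h34 : j' < B.max' (blk_ne hB) := by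
            have hv1 : (j : ℕ) < (B.max' (blk_ne hB) : ℕ) :=
              lt_of_le_of_ne (Fin.le_def.mp hjb) (fun h => hne2 (Fin.ext h.symm))
            have hv2 : (B.max' (blk_ne hB) : ℕ) ≠ (j' : ℕ) := by
              intro h
              exact hBB' (hWeq hB hB' ((Fin.ext h : B.max' (blk_ne hB) = j') ▸
                Finset.max'_mem B (blk_ne hB)) hj'B')
            rw [Fin.lt_def]
            omega
          exact hBB' (cross hπ hB' hB hmlt hlt h34 (Finset.min'_mem B' (blk_ne hB')) hj'B' hjB
            (Finset.max'_mem B (blk_ne hB))).symm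
        have hsnBB' : StrictNested B B' := ⟨(nested_iff hB hB').mpr ⟨hm, hMx⟩, hBB'⟩
        have hins : Dset π j = insert B' (Dset π j') := by
          ext W
          rw [hDj W]
          simp only [Set.mem_insert_iff]
          constructor
          · rintro ⟨hW, hsn⟩
            by_cases hWB' : W = B'
            · exact Or.inl hWB'
            · right
              rw [hDj' W]
              obtain ⟨s1, s2⟩ := (sn_iff hB hW).mp hsn
              refine ⟨hW, ?_⟩
              have hw1 : W.min' (blk_ne hW) ≤ j' := by
                rw [Fin.le_def]
                have := Fin.lt_def.mp s1
                have := Fin.le_def.mp haj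
                omega
              have hw2 : j' ≤ W.max' (blk_ne hW) := by
                rw [Fin.le_def]
                have := Fin.lt_def.mp s2
                have := congrArg Fin.val hbv
                simp only [Fin.val_fin_lt] at *
                omega
              rcases laminar hπ hW hB' hw1 hw2 ha'j' hj'b' with ⟨l1, l2⟩ | ⟨l1, l2⟩
              · exact ⟨(nested_iff hB' hW).mpr ⟨l1, l2⟩, fun h => hWB' h.symm⟩
              · exfalso
                have c1 : B'.min' (blk_ne hB') < W.min' (blk_ne hW) := by
                  rcases eq_or_lt_of_le l1 with heq | h
                  · exact absurd (hWeq hW hB' (Finset.min'_mem W (blk_ne hW))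
                      (heq ▸ Finset.min'_mem B' (blk_ne hB'))) hWB'
                  · exact h
                have c2 : W.min' (blk_ne hW) < j' := by
                  rw [Fin.lt_def]
                  have := Fin.lt_def.mp s1
                  have := Fin.le_def.mp haj
                  omega
                have c3 : j' < W.max' (blk_ne hW) := by
                  rcases eq_or_lt_of_le hw2 with heq | h
                  · exact absurd (hWeq hW hB' (by rw [heq]; exact Finset.max'_mem W (blk_ne hW))
                      hj'B') hWB'
                  · exact h
                exact hWB' (cross hπ hB' hW c1 c2 c3 (Finset.min'_mem B' (blk_ne hB')) hj'B'
                  (Finset.min'_mem W (blk_ne hW)) (Finset.max'_mem W (blk_ne hW))).symm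
          · rintro (rfl | hWD)
            · exact ⟨hB', hsnBB'⟩
            · obtain ⟨hW, hsn⟩ := (hDj' W).mp hWD
              obtain ⟨s1, s2⟩ := (sn_iff hB' hW).mp hsn
              exact ⟨hW, (sn_iff hB hW).mpr ⟨lt_of_lt_of_le s1 hm, lt_of_le_of_lt hMx s2⟩⟩
        have hB'notD : B' ∉ Dset π j' := fun hx => hx.2.2 rfl
        have hdep : blockDepth π j = blockDepth π j' + 1 := by
          rw [blockDepth_eq, blockDepth_eq, hins,
            Set.ncard_insert_of_notMem hB'notD (Dset_finite π j')]
        have hpar : IsParent π B B' := by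
          refine ⟨hB', hsnBB', ?_⟩
          rintro ⟨V, hV, hsn1, hsn2⟩
          have hVD : V ∈ Dset π j := (hDj V).mpr ⟨hV, hsn1⟩
          rw [hins, Set.mem_insert_iff] at hVD
          rcases hVD with rfl | hVD
          · exact hsn2.2 rfl
          · obtain ⟨t1, _⟩ := (sn_iff hB' hV).mp ((hDj' V).mp hVD).2
            obtain ⟨t2, _⟩ := (sn_iff hV hB').mp hsn2
            exact absurd (lt_trans t1 t2) (lt_irrefl _)
        have hcol : calt j ≠ calt j' := hc3 B B' hB hpar j hjB j' hj'B'
        constructor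
        · intro _; exact hcol
        · intro _ _
          omega

end ACAux


/-- A non-crossing partition of `{1,...,2n}` is anticommutator-friendly iff
(AC-Friendly1) holds and the canonical alternating colouring takes different values at
`2i-1` and `2i` for all `i`.  (Indices are 0-based: odd numbers `1,3,...,2n-1`
correspond to even indices, and the colours `1,2` to `0,1 : Fin 2`.) -/
theorem acFriendly_iff_calt (n : ℕ) (hn : 1 ≤ n) (π : NCPart (2*n))
    (hπ : IsNoncrossing π)
    (calt : Fin (2*n) → Fin 2)
    (hconst : MonoChrome calt π)
    (hc1 : calt ⟨0, by omega⟩ = 0)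
    (hc2 : ∀ j j' : Fin (2*n), IsOuterMax π j → IsOuterMin π j' →
      (j' : ℕ) = (j : ℕ) + 1 → calt j ≠ calt j')
    (hc3 : VNRP calt π) :
    ACFriendly n π ↔
      ((∀ j : Fin (2*n), IsOuterMax π j → Even (j : ℕ) ∨ (j : ℕ) = 2*n - 1) ∧
       ∀ j j' : Fin (2*n), Even (j : ℕ) → (j' : ℕ) = (j : ℕ) + 1 →
         calt j ≠ calt j') := by
  unfold ACFriendly
  refine and_congr Iff.rfl ⟨fun H j j' hev hjj => ?_, fun H j j' hev hjj hno => ?_⟩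
  · exact (ACAux.key hπ calt hconst hc2 hc3 j j' hjj).mp (fun hno => H j j' hev hjj hno)
  · exact (ACAux.key hπ calt hconst hc2 hc3 j j' hjj).mpr (H j j' hev hjj) hno
end
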